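/- arXiv:2407.05191 — 8 statements merged into one kernel-verified Lean document; each statement's English description precedes it below -/
import Mathlib

section
/- Let α, β ∈ ℕ with α, β > 1 be multiplicatively independent and let I ⊆ ℝ_{>0} be a non-empty open interval. Then there exist infinitely many pairs (n₁, n₂) ∈ ℕ × ℕ such that α^{n₁}/β^{n₂} ∈ I. -/
/-!
Taking logarithms, `α^m / β^n ∈ I` asks that `m log α - n log β` lie in a given interval.
Multiplicative independence makes `log α / log β` irrational, so the integer multiples of
`log α` are dense in the circle `ℝ / (log β) ℤ`; in a compact group the natural multiples
accumulate wherever the integer multiples do, hence they enter every open arc for infinitely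
many `m`. Once `m log α` exceeds the interval, the matching multiple of `log β` is nonnegative.
-/

open Set Filter

theorem irrational_log_div_log_of_pow_eq_pow_eq_zero {a b : ℕ} (ha : 1 < a) (hb : 1 < b)
    (h : ∀ m n : ℕ, a ^ m = b ^ n → m = 0) :
    Irrational (Real.log a / Real.log b) := by
  rintro ⟨r, hr⟩
  have hla : 0 < Real.log a := Real.log_pos (by exact_mod_cast ha)
  have hlb : 0 < Real.log b := Real.log_pos (by exact_mod_cast hb)
  obtain ⟨p, hp⟩ := Int.eq_ofNat_of_zero_le <|
    Rat.num_nonneg.2 (by exact_mod_cast hr ▸ (div_pos hla hlb).le)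
  rw [Rat.cast_def, hp, div_eq_div_iff (by positivity) hlb.ne'] at hr
  have hlog : Real.log (a ^ r.den) = Real.log (b ^ p) := by
    rw [Real.log_pow, Real.log_pow]
    push_cast at hr
    linarith
  have hpow : a ^ r.den = b ^ p := by
    exact_mod_cast Real.log_injOn_pos (mem_Ioi.2 (by positivity)) (mem_Ioi.2 (by positivity)) hlog
  exact r.den_nz (h _ _ hpow)

theorem AddCircle.frequently_nsmul_mem {a p : ℝ} [Fact (0 < p)] (ha : Irrational (a / p))
    {U : Set (AddCircle p)} (hU : IsOpen U) (hne : U.Nonempty) :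
    ∃ᶠ m : ℕ in atTop, m • (a : AddCircle p) ∈ U := by
  obtain ⟨x, hx⟩ := hne
  have hcl : x ∈ (AddSubgroup.zmultiples (a : AddCircle p)).topologicalClosure :=
    AddCircle.denseRange_zsmul_coe_iff.2 ha x
  exact (mapClusterPt_atTop_nsmul_iff_mem_topologicalClosure_zmultiples.2 hcl).frequently
    (hU.mem_nhds hx)

theorem infinite_setOf_mul_sub_mul_mem_Ioo {a b : ℝ} (ha : 0 < a) (hb : 0 < b)
    (hab : Irrational (a / b)) {c d : ℝ} (hcd : c < d) :
    {p : ℕ × ℕ | p.1 * a - p.2 * b ∈ Ioo c d}.Infinite := by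
  have : Fact (0 < b) := ⟨hb⟩
  have hU : IsOpen (((↑) : ℝ → AddCircle b) '' Ioo c d) :=
    QuotientAddGroup.isOpenMap_coe _ isOpen_Ioo
  have hlarge : ∀ᶠ m : ℕ in atTop, d ≤ m * a :=
    (tendsto_natCast_atTop_atTop.atTop_mul_const ha).eventually_ge_atTop d
  refine Infinite.of_image Prod.fst <| Nat.frequently_atTop_iff_infinite.1 <|
    ((AddCircle.frequently_nsmul_mem hab hU ((nonempty_Ioo.2 hcd).image _)).and_eventually
      hlarge).mono ?_
  rintro m ⟨⟨t, ht, hmt⟩, hdm⟩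
  obtain ⟨k, hk⟩ : ∃ k : ℤ, k • b = m * a - t := by
    rw [← AddCircle.coe_eq_zero_iff, AddCircle.coe_sub, hmt, ← nsmul_eq_mul,
      AddCircle.coe_nsmul, sub_self]
  rw [zsmul_eq_mul] at hk
  obtain ⟨n, rfl⟩ : ∃ n : ℕ, k = n := Int.eq_ofNat_of_zero_le <| by
    have hkb : (0 : ℝ) < k * b := by linarith [ht.2]
    exact_mod_cast (pos_of_mul_pos_left hkb hb.le).le
  refine ⟨(m, n), ?_, rfl⟩
  rw [Int.cast_natCast] at hk
  show m * a - n * b ∈ Ioo c d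
  rwa [hk, sub_sub_cancel]

theorem kronecker_ratio_infinite_general (α β : ℕ) (hα : 1 < α) (hβ : 1 < β)
    (hind : ∀ n₁ n₂ : ℕ, α ^ n₁ = β ^ n₂ → n₁ = 0 ∧ n₂ = 0)
    (I : Set ℝ) (hopen : IsOpen I)
    (hne : I.Nonempty) (hpos : I ⊆ Set.Ioi (0 : ℝ)) :
    {p : ℕ × ℕ | (α : ℝ) ^ p.1 / (β : ℝ) ^ p.2 ∈ I}.Infinite := by
  obtain ⟨x, hx⟩ := hne
  have hx0 : 0 < x := hpos hx
  obtain ⟨v, hxv, hsub⟩ :=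
    exists_Ico_subset_of_mem_nhds (hopen.mem_nhds hx) ⟨x + 1, lt_add_one x⟩
  have hirr := irrational_log_div_log_of_pow_eq_pow_eq_zero hα hβ fun m n h => (hind m n h).1
  refine (infinite_setOf_mul_sub_mul_mem_Ioo (Real.log_pos (by exact_mod_cast hα))
    (Real.log_pos (by exact_mod_cast hβ)) hirr (Real.log_lt_log hx0 hxv)).mono ?_
  rintro ⟨m, n⟩ ⟨hlo, hhi⟩
  have hval : (α : ℝ) ^ m / (β : ℝ) ^ n = Real.exp (m * Real.log α - n * Real.log β) := by
    rw [Real.exp_sub, Real.exp_nat_mul, Real.exp_nat_mul, Real.exp_log, Real.exp_log] <;>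
      positivity
  refine hsub ⟨?_, ?_⟩ <;> rw [hval]
  · exact ((Real.log_lt_iff_lt_exp hx0).1 hlo).le
  · exact (Real.lt_log_iff_exp_lt (hx0.trans hxv)).1 hhi

/-- Let `α, β > 1` be multiplicatively independent natural numbers and let `I` be a non-empty
open interval contained in the positive reals. Then there are infinitely many pairs
`(n₁, n₂) ∈ ℕ × ℕ` such that `α^{n₁}/β^{n₂} ∈ I`. -/
theorem kronecker_ratio_infinite (α β : ℕ) (hα : 1 < α) (hβ : 1 < β)
    (hind : ∀ n₁ n₂ : ℕ, α ^ n₁ = β ^ n₂ → n₁ = 0 ∧ n₂ = 0)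
    (I : Set ℝ) (hopen : IsOpen I) (hinterval : I.OrdConnected)
    (hne : I.Nonempty) (hpos : I ⊆ Set.Ioi (0 : ℝ)) :
    {p : ℕ × ℕ | (α : ℝ) ^ p.1 / (β : ℝ) ^ p.2 ∈ I}.Infinite :=
  kronecker_ratio_infinite_general α β hα hβ hind I hopen hne hpos
end

section
/- Let α, β ∈ ℕ with α, β > 1 be multiplicatively independent. Then the set {α^{n₁}/β^{n₂} : n₁, n₂ ∈ ℕ} is dense in the positive reals (0, ∞). -/
/-!
Since `α ^ m / β ^ n = exp (m log α - n log β)`, it suffices that the additive monoid generated by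
`log α` and `-log β` is dense in `ℝ`. Multiplicative independence makes `log α / log β`
irrational, so Dirichlet's approximation theorem yields nonzero elements `m log α - n log β` of
arbitrarily small absolute value. Multiples of such an element `c`, shifted by multiples of an
element of the opposite sign, meet every interval longer than `|c|`.
-/

open Set Real

section
variable {G : Type*} [AddCommGroup G] [LinearOrder G] [IsOrderedAddMonoid G] [Archimedean G]

theorem exists_nsmul_add_nsmul_mem_Ioo {c d a b : G} (hc : 0 < c) (hd : d < 0) (hcab : c < b - a) :
    ∃ m n : ℕ, m • c + n • d ∈ Ioo a b := by
  obtain ⟨n, hn⟩ := Archimedean.arch (-a) (neg_pos.2 hd)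
  have hnd : n • d ≤ a := by rwa [neg_nsmul, neg_le_neg_iff] at hn
  obtain ⟨m, ⟨hlo, hhi⟩, -⟩ := existsUnique_add_zsmul_mem_Ioc hc (n • d) a
  have hm : 0 ≤ m := by
    by_contra! hm
    exact hlo.not_ge (add_le_of_le_of_nonpos hnd ((smul_neg_iff_of_neg_left hm).2 hc).le)
  lift m to ℕ using hm
  rw [natCast_zsmul, add_comm] at hlo hhi
  exact ⟨m, n, hlo, hhi.trans_lt (lt_sub_iff_add_lt'.1 hcab)⟩

theorem AddSubmonoid.dense_of_not_isolated_zero [TopologicalSpace G] [OrderTopology G]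
    (M : AddSubmonoid G) (hpos : ∃ p ∈ M, 0 < p) (hneg : ∃ d ∈ M, d < 0)
    (hM : ∀ ε > 0, ∃ c ∈ M, c ≠ 0 ∧ |c| < ε) : Dense (M : Set G) := by
  obtain ⟨p, hpM, hp⟩ := hpos
  obtain ⟨d, hdM, hd⟩ := hneg
  have : Nontrivial G := ⟨⟨p, 0, hp.ne'⟩⟩
  refine dense_of_exists_between fun a b hab => ?_
  obtain ⟨c, hcM, hc0, hcε⟩ := hM (b - a) (sub_pos.2 hab)
  rcases hc0.lt_or_gt with hc | hc
  · rw [abs_of_neg hc, ← neg_sub_neg] at hcε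
    obtain ⟨m, n, hlo, hhi⟩ := exists_nsmul_add_nsmul_mem_Ioo (neg_pos.2 hc) (neg_lt_zero.2 hp) hcε
    rw [neg_nsmul, neg_nsmul, ← neg_add, neg_lt_neg_iff] at hlo hhi
    exact ⟨m • c + n • p, add_mem (nsmul_mem hcM m) (nsmul_mem hpM n), hhi, hlo⟩
  · rw [abs_of_pos hc] at hcε
    obtain ⟨m, n, hmn⟩ := exists_nsmul_add_nsmul_mem_Ioo hc hd hcε
    exact ⟨m • c + n • d, add_mem (nsmul_mem hcM m) (nsmul_mem hdM n), hmn⟩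

end

theorem Real.pow_eq_pow_iff_mul_log_eq {x y : ℝ} (hx : 0 < x) (hy : 0 < y) (m n : ℕ) :
    x ^ m = y ^ n ↔ m * log x = n * log y := by
  rw [← log_pow, ← log_pow]
  exact (log_injOn_pos.eq_iff (pow_pos hx m) (pow_pos hy n)).symm

theorem exists_mem_closure_pair_neg_ne_zero_abs_lt {a b : ℝ} (ha : 0 ≤ a) (hb : 0 < b)
    (hind : ∀ m n : ℕ, m • a = n • b → m = 0) {ε : ℝ} (hε : 0 < ε) :
    ∃ c ∈ AddSubmonoid.closure {a, -b}, c ≠ 0 ∧ |c| < ε := by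
  obtain ⟨N, hN⟩ := exists_nat_gt (b / ε)
  have hN0 : 0 < N := by exact_mod_cast (div_pos hb hε).trans hN
  obtain ⟨k, hk0, -, hk⟩ := exists_nat_abs_mul_sub_round_le (a / b) hN0
  obtain ⟨j, hj⟩ : ∃ j : ℕ, round (k * (a / b)) = j :=
    Int.eq_ofNat_of_zero_le (by rw [round_eq]; exact Int.floor_nonneg.2 (by positivity))
  rw [hj, Int.cast_natCast] at hk
  have hc : k • a + j • -b = b * (k * (a / b) - j) := by
    rw [nsmul_eq_mul, smul_neg, nsmul_eq_mul]; field_simp; ring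
  refine ⟨k • a + j • -b, (AddSubmonoid.mem_closure_pair _ _ _).2 ⟨k, j, rfl⟩, fun h => ?_, ?_⟩
  · rw [smul_neg, ← sub_eq_add_neg, sub_eq_zero] at h
    exact hk0.ne' (hind k j h)
  · calc |k • a + j • -b| = b * |k * (a / b) - j| := by rw [hc, abs_mul, abs_of_pos hb]
      _ ≤ b * (1 / (N + 1)) := by gcongr
      _ < ε := by
        rw [div_lt_iff₀ hε] at hN
        rw [mul_one_div, div_lt_iff₀ (by positivity)]
        nlinarith

/-- Let `α, β > 1` be multiplicatively independent natural numbers. Then the set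
`{α^{n₁}/β^{n₂} : n₁, n₂ ∈ ℕ}` is dense in the positive reals `(0, ∞)`. -/
theorem ratio_powers_dense (α β : ℕ) (hα : 1 < α) (hβ : 1 < β)
    (hind : ∀ n₁ n₂ : ℕ, α ^ n₁ = β ^ n₂ → n₁ = 0 ∧ n₂ = 0) :
    Set.Ioi (0 : ℝ) ⊆ closure {x : ℝ | ∃ n₁ n₂ : ℕ, x = (α : ℝ) ^ n₁ / (β : ℝ) ^ n₂} := by
  have hα0 : (0 : ℝ) < α := by positivity
  have hβ0 : (0 : ℝ) < β := by positivity
  have hlogα : 0 < log α := log_pos (by exact_mod_cast hα)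
  have hlogβ : 0 < log β := log_pos (by exact_mod_cast hβ)
  set M := AddSubmonoid.closure {log α, -log β}
  have hlog_indep : ∀ m n : ℕ, m • log α = n • log β → m = 0 := fun m n h => by
    rw [nsmul_eq_mul, nsmul_eq_mul, ← pow_eq_pow_iff_mul_log_eq hα0 hβ0] at h
    exact (hind m n (by exact_mod_cast h)).1
  have hdense : Dense (M : Set ℝ) := M.dense_of_not_isolated_zero
    ⟨_, AddSubmonoid.subset_closure (mem_insert _ _), hlogα⟩
    ⟨_, AddSubmonoid.subset_closure (mem_insert_of_mem _ rfl), neg_lt_zero.2 hlogβ⟩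
    fun ε hε => exists_mem_closure_pair_neg_ne_zero_abs_lt hlogα.le hlogβ hlog_indep hε
  have hexp : exp '' M ⊆ {x : ℝ | ∃ n₁ n₂ : ℕ, x = (α : ℝ) ^ n₁ / (β : ℝ) ^ n₂} := by
    rintro _ ⟨_, hx, rfl⟩
    obtain ⟨m, n, rfl⟩ := (AddSubmonoid.mem_closure_pair _ _ _).1 hx
    refine ⟨m, n, ?_⟩
    rw [smul_neg, ← sub_eq_add_neg, exp_sub, nsmul_eq_mul, nsmul_eq_mul, exp_nat_mul, exp_nat_mul,
      exp_log hα0, exp_log hβ0]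
  calc Ioi 0 = exp '' closure M := by rw [hdense.closure_eq, image_univ, range_exp]
    _ ⊆ closure (exp '' M) := image_closure_subset_closure_image continuous_exp
    _ ⊆ _ := closure_mono hexp
end

section
/- Let α ∈ ℕ with α > 1, let l ≥ 1, let c₁,…,c_l be non-zero integers, and let d ∈ ℤ. Let S ⊆ ℕ^l be the set of all (n₁,…,n_l) ∈ ℕ^l such that c₁·α^{n₁} + ⋯ + c_l·α^{n_l} = d. Then S belongs to the class 𝔄, i.e., S is a finite union of finite intersections of basic sets, each basic set being either of the form {(n₁,…,n_l) ∈ ℕ^l : n_μ = n_σ + c} for some indices 1 ≤ μ, σ ≤ l and constant c ∈ ℕ, or of the form {(n₁,…,n_l) ∈ ℕ^l : n_ξ = b} for some index 1 ≤ ξ ≤ l and constant b ∈ ℕ. -/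
/-- A basic subset of `ℕ^l`: either `{n : n_μ = n_σ + c}` or `{n : n_ξ = b}`. -/
def IsBasicSet (l : ℕ) (X : Set (Fin l → ℕ)) : Prop :=
  (∃ (μ σ : Fin l) (c : ℕ), X = {n : Fin l → ℕ | n μ = n σ + c}) ∨
  (∃ (ξ : Fin l) (b : ℕ), X = {n : Fin l → ℕ | n ξ = b})

/-- A set `S ⊆ ℕ^l` belongs to the class `𝔄` if it is a finite union of finite intersections
of basic sets. -/
def MemClassA (l : ℕ) (S : Set (Fin l → ℕ)) : Prop :=
  ∃ (I : Finset ℕ) (J : ℕ → Finset ℕ) (X : ℕ → ℕ → Set (Fin l → ℕ)),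
    (∀ i ∈ I, ∀ j ∈ J i, IsBasicSet l (X i j)) ∧
    S = ⋃ i ∈ I, ⋂ j ∈ J i, X i j


inductive PosA (l : ℕ) : Set (Fin l → ℕ) → Prop
  | univ : PosA l Set.univ
  | inter {X S : Set (Fin l → ℕ)} : IsBasicSet l X → PosA l S → PosA l (X ∩ S)

inductive ClA (l : ℕ) : Set (Fin l → ℕ) → Prop
  | empty : ClA l ∅
  | union {P S : Set (Fin l → ℕ)} : PosA l P → ClA l S → ClA l (P ∪ S)

lemma posA_exists {l : ℕ} {S : Set (Fin l → ℕ)} (h : PosA l S) :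
    ∃ (J : Finset ℕ) (X : ℕ → Set (Fin l → ℕ)),
      (∀ j ∈ J, IsBasicSet l (X j)) ∧ S = ⋂ j ∈ J, X j := by
  induction h with
  | univ => exact ⟨∅, fun _ => ∅, by simp, by simp⟩
  | @inter Xb S hXb _ ih =>
    obtain ⟨J, X, hX, rfl⟩ := ih
    set j₀ := J.sup id + 1 with hj₀def
    have hj₀ : j₀ ∉ J := by
      intro h
      have := Finset.le_sup (f := id) h
      simp only [id] at this
      omega
    refine ⟨insert j₀ J, Function.update X j₀ Xb, ?_, ?_⟩
    · intro j hj
      rcases Finset.mem_insert.1 hj with rfl | hj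
      · simpa using hXb
      · rw [Function.update_of_ne (by rintro rfl; exact hj₀ hj)]
        exact hX j hj
    · rw [Finset.set_biInter_insert, Function.update_self]
      congr 1
      exact Set.iInter₂_congr fun j hj =>
        (Function.update_of_ne (by rintro rfl; exact hj₀ hj) _ _).symm

lemma clA_memClassA {l : ℕ} {S : Set (Fin l → ℕ)} (h : ClA l S) : MemClassA l S := by
  induction h with
  | empty => exact ⟨∅, fun _ => ∅, fun _ _ => ∅, by simp, by simp⟩
  | @union P S hP _ ih =>
    obtain ⟨I, J, X, hX, rfl⟩ := ih
    obtain ⟨Jp, Xp, hXp, rfl⟩ := posA_exists hP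
    set i₀ := I.sup id + 1 with hi₀def
    have hi₀ : i₀ ∉ I := by
      intro h
      have := Finset.le_sup (f := id) h
      simp only [id] at this
      omega
    refine ⟨insert i₀ I, Function.update J i₀ Jp,
      Function.update X i₀ (fun j => Xp j), ?_, ?_⟩
    · intro i hi
      rcases Finset.mem_insert.1 hi with rfl | hi
      · rw [Function.update_self, Function.update_self]
        exact hXp
      · rw [Function.update_of_ne (by rintro rfl; exact hi₀ hi),
          Function.update_of_ne (by rintro rfl; exact hi₀ hi)]
        exact hX i hi
    · rw [Finset.set_biUnion_insert, Function.update_self, Function.update_self]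
      congr 1
      refine Set.iUnion₂_congr fun i hi => ?_
      rw [Function.update_of_ne (by rintro rfl; exact hi₀ hi),
        Function.update_of_ne (by rintro rfl; exact hi₀ hi)]

lemma PosA.inter' {l : ℕ} {P Q : Set (Fin l → ℕ)} (hP : PosA l P) (hQ : PosA l Q) :
    PosA l (P ∩ Q) := by
  induction hP with
  | univ => rwa [Set.univ_inter]
  | inter hX _ ih =>
    rw [Set.inter_assoc]
    exact .inter hX ih

lemma posA_clA {l : ℕ} {P : Set (Fin l → ℕ)} (h : PosA l P) : ClA l P := by
  have := ClA.union h ClA.empty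
  rwa [Set.union_empty] at this

lemma ClA.union' {l : ℕ} {S T : Set (Fin l → ℕ)} (hS : ClA l S) (hT : ClA l T) :
    ClA l (S ∪ T) := by
  induction hS with
  | empty => rwa [Set.empty_union]
  | union hP _ ih =>
    rw [Set.union_assoc]
    exact .union hP ih

lemma ClA.inter1 {l : ℕ} {P T : Set (Fin l → ℕ)} (hP : PosA l P) (hT : ClA l T) :
    ClA l (P ∩ T) := by
  induction hT with
  | empty => rw [Set.inter_empty]; exact .empty
  | union hQ _ ih =>
    rw [Set.inter_union_distrib_left]
    exact .union (hP.inter' hQ) ih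

lemma ClA.inter' {l : ℕ} {S T : Set (Fin l → ℕ)} (hS : ClA l S) (hT : ClA l T) :
    ClA l (S ∩ T) := by
  induction hS with
  | empty => rw [Set.empty_inter]; exact .empty
  | union hP _ ih =>
    rw [Set.union_inter_distrib_right]
    exact (ClA.inter1 hP hT).union' ih

lemma clA_univ {l : ℕ} : ClA l Set.univ := posA_clA .univ

lemma clA_basic {l : ℕ} {X : Set (Fin l → ℕ)} (h : IsBasicSet l X) : ClA l X := by
  have := PosA.inter h PosA.univ
  rw [Set.inter_univ] at this
  exact posA_clA this

lemma clA_biUnion {l : ℕ} {β : Type*} [DecidableEq β] (F : Finset β) (S : β → Set (Fin l → ℕ))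
    (h : ∀ x ∈ F, ClA l (S x)) : ClA l (⋃ x ∈ F, S x) := by
  classical
  induction F using Finset.induction_on with
  | empty => simpa using ClA.empty
  | insert _ _ hx ih =>
    rw [Finset.set_biUnion_insert]
    exact (h _ (Finset.mem_insert_self _ _)).union'
      (ih fun x hx => h x (Finset.mem_insert_of_mem hx))

lemma PosA.preimage {l l' : ℕ} (e : Fin l' → Fin l) {T : Set (Fin l' → ℕ)}
    (hT : PosA l' T) : PosA l ((fun n : Fin l → ℕ => n ∘ e) ⁻¹' T) := by
  induction hT with
  | univ => rw [Set.preimage_univ]; exact .univ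
  | inter hX _ ih =>
    rw [Set.preimage_inter]
    refine PosA.inter ?_ ih
    rcases hX with ⟨μ, σ, c, rfl⟩ | ⟨ξ, b, rfl⟩
    · exact Or.inl ⟨e μ, e σ, c, rfl⟩
    · exact Or.inr ⟨e ξ, b, rfl⟩

lemma ClA.preimage {l l' : ℕ} (e : Fin l' → Fin l) {T : Set (Fin l' → ℕ)}
    (hT : ClA l' T) : ClA l ((fun n : Fin l → ℕ => n ∘ e) ⁻¹' T) := by
  induction hT with
  | empty => rw [Set.preimage_empty]; exact .empty
  | union hP _ ih =>
    rw [Set.preimage_union]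
    exact .union (hP.preimage e) ih


lemma key (α : ℕ) (hα : 1 < α) :
    ∀ l (c : Fin l → ℤ) (d : ℤ), ClA l {n | ∑ i, c i * (α : ℤ) ^ (n i) = d} := by
  have hα0 : (0:ℤ) ≤ (α:ℤ) := by positivity
  have hα1 : (1:ℤ) ≤ (α:ℤ) := by exact_mod_cast hα.le
  intro l
  induction l using Nat.strong_induction_on with
  | _ l IH =>
  intro c d
  by_cases h0 : ∃ i, c i = 0
  · -- some coefficient is zero: reduce dimension
    obtain ⟨i, hi⟩ := h0
    obtain ⟨m, rfl⟩ : ∃ m, l = m + 1 := ⟨l - 1, by have := i.pos; omega⟩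
    have hset : {n : Fin (m+1) → ℕ | ∑ k, c k * (α:ℤ) ^ (n k) = d}
        = (fun n : Fin (m+1) → ℕ => n ∘ i.succAbove) ⁻¹'
          {n : Fin m → ℕ | ∑ k, c (i.succAbove k) * (α:ℤ) ^ (n k) = d} := by
      ext n
      simp only [Set.mem_setOf_eq, Set.mem_preimage, Function.comp]
      rw [Fin.sum_univ_succAbove (fun k => c k * (α:ℤ) ^ (n k)) i, hi, zero_mul, zero_add]
    rw [hset]
    exact ClA.preimage _ (IH m (Nat.lt_succ_self m) _ d)
  · push_neg at h0
    rcases l with _ | _ | m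
    · -- l = 0
      by_cases hd : d = 0
      · have : {n : Fin 0 → ℕ | ∑ i, c i * (α:ℤ) ^ (n i) = d} = Set.univ := by
          ext n; simp [hd]
        rw [this]; exact clA_univ
      · have : {n : Fin 0 → ℕ | ∑ i, c i * (α:ℤ) ^ (n i) = d} = ∅ := by
          ext n
          simp only [Set.mem_setOf_eq, Set.mem_empty_iff_false, iff_false]
          simp [eq_comm, hd]
        rw [this]; exact ClA.empty
    · -- l = 1
      have hone : ∀ n : Fin 1 → ℕ, ∑ k, c k * (α:ℤ) ^ (n k) = c 0 * (α:ℤ) ^ (n 0) :=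
        fun n => Fin.sum_univ_one _
      have hset : {n : Fin 1 → ℕ | ∑ k, c k * (α:ℤ) ^ (n k) = d}
          = ⋃ b ∈ (Finset.range (d.natAbs + 1)).filter (fun b => c 0 * (α:ℤ) ^ b = d),
              {n : Fin 1 → ℕ | n 0 = b} := by
        ext n
        simp only [Set.mem_setOf_eq, Set.mem_iUnion, Finset.mem_filter,
          Finset.mem_range, exists_prop]
        rw [hone n]
        constructor
        · intro h
          refine ⟨n 0, ⟨?_, h⟩, rfl⟩
          have h1 : (α:ℤ) ^ (n 0) ≤ |d| := by
            rw [← h, abs_mul, abs_pow, abs_of_nonneg hα0]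
            exact le_mul_of_one_le_left (by positivity) (Int.one_le_abs (h0 0))
          have h2 : ((n 0 : ℕ) : ℤ) < (α:ℤ) ^ (n 0) := by
            exact_mod_cast Nat.lt_pow_self (n := n 0) hα
          have h3 : ((n 0 : ℕ) : ℤ) < (d.natAbs : ℤ) := by
            rw [← Int.abs_eq_natAbs]; exact h2.trans_le h1
          omega
        · rintro ⟨b, ⟨-, hb⟩, hnb⟩
          rw [hnb]; exact hb
      rw [hset]
      exact clA_biUnion _ _ fun b _ => clA_basic (Or.inr ⟨0, b, rfl⟩)
    · -- l = m + 2
      set C : ℤ := ∑ k, |c k| with hCdef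
      have hC0 : 0 ≤ C := Finset.sum_nonneg fun _ _ => abs_nonneg _
      set B : ℕ := (|d| + C).toNat with hBdef
      have hBcast : (B : ℤ) = |d| + C := Int.toNat_of_nonneg (by positivity)
      set S := {n : Fin (m+2) → ℕ | ∑ k, c k * (α:ℤ) ^ (n k) = d} with hSdef
      have hset : S = ⋃ p ∈ (Finset.univ.offDiag ×ˢ Finset.range (B + 1)),
          ({n : Fin (m+2) → ℕ | n p.1.1 = n p.1.2 + p.2} ∩ S) := by
        ext n
        simp only [Set.mem_iUnion, Set.mem_inter_iff, Set.mem_setOf_eq, exists_prop,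
          Finset.mem_product, Finset.mem_offDiag, Finset.mem_range, Finset.mem_univ,
          true_and, hSdef]
        constructor
        · intro hn
          obtain ⟨i, -, hi⟩ := Finset.exists_max_image Finset.univ n ⟨0, Finset.mem_univ 0⟩
          obtain ⟨j0, hj0⟩ := exists_ne i
          obtain ⟨j, hjmem, hj⟩ := Finset.exists_max_image (Finset.univ.erase i) n
            ⟨j0, Finset.mem_erase.2 ⟨hj0, Finset.mem_univ _⟩⟩
          have hij : i ≠ j := (Finset.mem_erase.1 hjmem).1.symm
          have hji : n j ≤ n i := hi j (Finset.mem_univ j)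
          have heq : c i * (α:ℤ) ^ (n i)
              = d - ∑ k ∈ Finset.univ.erase i, c k * (α:ℤ) ^ (n k) := by
            rw [eq_sub_iff_add_eq]
            rw [← Finset.add_sum_erase Finset.univ (fun k => c k * (α:ℤ) ^ (n k))
              (Finset.mem_univ i)] at hn
            exact hn
          have habs : (α:ℤ) ^ (n i) ≤ (|d| + C) * (α:ℤ) ^ (n j) := by
            have hpj : (1:ℤ) ≤ (α:ℤ) ^ (n j) := one_le_pow₀ hα1
            calc (α:ℤ) ^ (n i) ≤ |c i| * (α:ℤ) ^ (n i) :=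
                  le_mul_of_one_le_left (by positivity) (Int.one_le_abs (h0 i))
              _ = |c i * (α:ℤ) ^ (n i)| := by rw [abs_mul, abs_pow, abs_of_nonneg hα0]
              _ = |d - ∑ k ∈ Finset.univ.erase i, c k * (α:ℤ) ^ (n k)| := by rw [heq]
              _ ≤ |d| + |∑ k ∈ Finset.univ.erase i, c k * (α:ℤ) ^ (n k)| := abs_sub _ _
              _ ≤ |d| + ∑ k ∈ Finset.univ.erase i, |c k * (α:ℤ) ^ (n k)| :=
                  add_le_add_right (Finset.abs_sum_le_sum_abs _ _) _
              _ ≤ |d| + ∑ k ∈ Finset.univ.erase i, |c k| * (α:ℤ) ^ (n j) := by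
                  refine add_le_add_right (Finset.sum_le_sum fun k hk => ?_) _
                  rw [abs_mul, abs_pow, abs_of_nonneg hα0]
                  exact mul_le_mul_of_nonneg_left
                    (pow_le_pow_right₀ hα1 (hj k hk)) (abs_nonneg _)
              _ ≤ |d| + C * (α:ℤ) ^ (n j) := by
                  rw [← Finset.sum_mul]
                  refine add_le_add_right
                    (mul_le_mul_of_nonneg_right ?_ (by positivity)) _
                  exact Finset.sum_le_sum_of_subset_of_nonneg (Finset.subset_univ _)
                    (fun _ _ _ => abs_nonneg _)
              _ ≤ (|d| + C) * (α:ℤ) ^ (n j) := by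
                  rw [add_mul]
                  have : |d| ≤ |d| * (α:ℤ) ^ (n j) :=
                    le_mul_of_one_le_right (abs_nonneg d) hpj
                  linarith
          have hsplit : (α:ℤ) ^ (n i) = (α:ℤ) ^ (n i - n j) * (α:ℤ) ^ (n j) := by
            rw [← pow_add]; congr 1; omega
          rw [hsplit] at habs
          have hfin : (α:ℤ) ^ (n i - n j) ≤ |d| + C :=
            le_of_mul_le_mul_right habs (by positivity)
          have hlt : ((n i - n j : ℕ) : ℤ) < |d| + C := by
            have : ((n i - n j : ℕ) : ℤ) < (α:ℤ) ^ (n i - n j) := by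
              exact_mod_cast Nat.lt_pow_self (n := n i - n j) hα
            exact this.trans_le hfin
          rw [← hBcast] at hlt
          exact ⟨((i, j), n i - n j), ⟨hij, by omega⟩, show n i = n j + (n i - n j) by omega, hn⟩
        · rintro ⟨p, -, -, hn⟩
          exact hn
      rw [hset]
      refine clA_biUnion _ _ ?_
      rintro ⟨⟨i, j⟩, e⟩ hp
      simp only [Finset.mem_product, Finset.mem_offDiag, Finset.mem_univ, true_and] at hp
      obtain ⟨hij, -⟩ := hp
      obtain ⟨j', hj'⟩ := Fin.exists_succAbove_eq (Ne.symm hij)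
      set c' : Fin (m+1) → ℤ :=
        fun k => c (i.succAbove k) + if k = j' then c i * (α:ℤ) ^ e else 0 with hc'def
      have hpiece : {n : Fin (m+2) → ℕ | n i = n j + e} ∩ S
          = {n : Fin (m+2) → ℕ | n i = n j + e} ∩
            ((fun n : Fin (m+2) → ℕ => n ∘ i.succAbove) ⁻¹'
              {n : Fin (m+1) → ℕ | ∑ k, c' k * (α:ℤ) ^ (n k) = d}) := by
        ext n
        simp only [Set.mem_inter_iff, Set.mem_setOf_eq, Set.mem_preimage,
          Function.comp, hSdef]
        refine and_congr_right fun hnij => ?_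
        have hsum : ∑ k, c k * (α:ℤ) ^ (n k)
            = ∑ k : Fin (m+1), c' k * (α:ℤ) ^ (n (i.succAbove k)) := by
          rw [Fin.sum_univ_succAbove (fun k => c k * (α:ℤ) ^ (n k)) i]
          simp only [hc'def, add_mul, ite_mul, zero_mul]
          rw [Finset.sum_add_distrib,
            Finset.sum_ite_eq' Finset.univ j'
              (fun k => c i * (α:ℤ) ^ e * (α:ℤ) ^ (n (i.succAbove k)))]
          simp only [Finset.mem_univ, if_true, hj']
          rw [hnij, pow_add]
          ring
        rw [hsum]
      rw [hpiece]
      exact (clA_basic (Or.inl ⟨i, j, e, rfl⟩)).inter'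
        (ClA.preimage _ (IH (m+1) (by omega) c' d))

/-- Let `α > 1`, let `l ≥ 1`, let `c₁,…,c_l` be non-zero integers and `d ∈ ℤ`. Then the set of
solutions `(n₁,…,n_l) ∈ ℕ^l` of `c₁·α^{n₁} + ⋯ + c_l·α^{n_l} = d` belongs to the class `𝔄`. -/
theorem solutions_single_base_memClassA (α : ℕ) (hα : 1 < α) (l : ℕ) (hl : 1 ≤ l)
    (c : Fin l → ℤ) (hc : ∀ i, c i ≠ 0) (d : ℤ) :
    MemClassA l {n : Fin l → ℕ | ∑ i, c i * (α : ℤ) ^ (n i) = d} :=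
  clA_memClassA (key α hα l c d)
end

section
/- Let α, β ∈ ℕ with α, β > 1 be multiplicatively independent, let l ≥ 2, let z₁,…,z_l ∈ {α, β} with z₁ = α and z₂ = β, let c₁,…,c_l be non-zero integers, and let d ∈ ℤ. Let S be the set of all (n₁,…,n_l) ∈ ℕ^l satisfying: (a) c₁·z₁^{n₁} + ⋯ + c_l·z_l^{n_l} = d; (b) z₁^{n₁} ≥ z₃^{n₃}, z₂^{n₂} ≥ z₃^{n₃}, and z₃^{n₃} ≥ z₄^{n₄} ≥ ⋯ ≥ z_l^{n_l}; (c) for every non-empty proper subset I of {1,…,l}, the sub-sum Σ_{i∈I} c_i·z_i^{n_i} is non-zero. Then there exist rational numbers ξ₁ and ξ₂ such that for every (n₁,…,n_l) ∈ S, both n₁ ≥ (log β / log α)·n₂ − ξ₁ and n₂ ≥ (log α / log β)·n₁ − ξ₂ hold. -/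
/-!
By (b) the two leading terms `α ^ n₁` and `β ^ n₂` dominate every other term, so solving (a)
for one of them bounds it by `K` times the other, where `K = |d| + ∑ |cᵢ|`. As `K < α ^ K`,
this gives `β ^ n₂ ≤ α ^ (n₁ + K)`, and taking logarithms `n₁ ≥ (log β / log α) n₂ - K`;
the second inequality is symmetric.
-/

open Finset

theorem Fin.antitoneOn_of_succ_le {α : Type*} [Preorder α] {l k : ℕ} {f : Fin l → α}
    (hf : ∀ i j : Fin l, k ≤ (i : ℕ) → (j : ℕ) = i + 1 → f j ≤ f i) :
    AntitoneOn f {i | k ≤ (i : ℕ)} := by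
  rintro i (hki : k ≤ (i : ℕ)) ⟨m, hm⟩ - (hij : (i : ℕ) ≤ m)
  induction m with
  | zero => exact le_of_eq (congrArg f (Fin.ext (by simp at hij ⊢; omega)))
  | succ m ih =>
    rcases (hij.lt_or_eq : (i : ℕ) < m + 1 ∨ _) with hlt | heq
    · exact (hf ⟨m, by omega⟩ ⟨m + 1, hm⟩ (show k ≤ m by omega) rfl).trans (ih _ (by omega))
    · exact le_of_eq (congrArg f (Fin.ext heq.symm))

theorem le_lead_terms_of_chain {α : Type*} [Preorder α] {l : ℕ} (hl : 2 ≤ l) {f : Fin l → α}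
    (hthird : ∀ j : Fin l, (j : ℕ) = 2 → f j ≤ f ⟨0, by omega⟩ ∧ f j ≤ f ⟨1, by omega⟩)
    (hchain : ∀ i j : Fin l, 2 ≤ (i : ℕ) → (j : ℕ) = i + 1 → f j ≤ f i) :
    (∀ i, i ≠ ⟨1, by omega⟩ → f i ≤ f ⟨0, by omega⟩) ∧
      (∀ i, i ≠ ⟨0, by omega⟩ → f i ≤ f ⟨1, by omega⟩) := by
  have htail : ∀ i : Fin l, 2 ≤ (i : ℕ) → f i ≤ f ⟨0, by omega⟩ ∧ f i ≤ f ⟨1, by omega⟩ := by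
    intro i hi
    have h2 : 2 < l := lt_of_le_of_lt hi i.isLt
    have hle : f i ≤ f ⟨2, h2⟩ := Fin.antitoneOn_of_succ_le hchain (le_refl 2) hi hi
    exact ⟨hle.trans (hthird _ rfl).1, hle.trans (hthird _ rfl).2⟩
  constructor
  · rintro ⟨_ | _ | m, hm⟩ hi
    · exact le_rfl
    · exact absurd rfl hi
    · exact (htail _ (by simp)).1
  · rintro ⟨_ | _ | m, hm⟩ hi
    · exact absurd rfl hi
    · exact le_rfl
    · exact (htail _ (by simp)).2

theorem le_mul_of_sum_mul_eq {ι : Type*} [Fintype ι] [DecidableEq ι] {c : ι → ℤ} {x : ι → ℕ}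
    {d : ℤ} (hsum : ∑ i, c i * (x i : ℤ) = d) {j : ι} (hcj : c j ≠ 0) {M : ℕ} (hM : 1 ≤ M)
    (hle : ∀ i, i ≠ j → x i ≤ M) :
    x j ≤ (d.natAbs + ∑ i, (c i).natAbs) * M := by
  have hrest : |∑ i ∈ univ.erase j, c i * (x i : ℤ)| ≤ (∑ i, |c i|) * M := by
    calc |∑ i ∈ univ.erase j, c i * (x i : ℤ)|
        ≤ ∑ i ∈ univ.erase j, |c i| * M := by
          refine (abs_sum_le_sum_abs _ _).trans (sum_le_sum fun i hi => ?_)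
          rw [abs_mul, Nat.abs_cast]
          gcongr
          exact hle i (ne_of_mem_erase hi)
      _ ≤ ∑ i, |c i| * M :=
          sum_le_sum_of_subset_of_nonneg (erase_subset _ _) fun _ _ _ => by positivity
      _ = (∑ i, |c i|) * M := (sum_mul _ _ _).symm
  have hlead : c j * (x j : ℤ) = d - ∑ i ∈ univ.erase j, c i * (x i : ℤ) := by
    rw [← hsum, ← add_sum_erase univ _ (mem_univ j), add_sub_cancel_right]
  zify
  calc (x j : ℤ) ≤ |c j| * x j := le_mul_of_one_le_left (by positivity) (Int.one_le_abs hcj)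
    _ = |d - ∑ i ∈ univ.erase j, c i * (x i : ℤ)| := by rw [← hlead, abs_mul, Nat.abs_cast]
    _ ≤ |d| + (∑ i, |c i|) * M := (abs_sub _ _).trans (by gcongr)
    _ ≤ (|d| + ∑ i, |c i|) * M := by
      rw [add_mul]
      gcongr
      exact le_mul_of_one_le_right (abs_nonneg d) (by exact_mod_cast hM)

theorem sub_le_of_pow_le_mul_pow {a b K m p : ℕ} (ha : 1 < a) (hb : 0 < b)
    (h : b ^ p ≤ K * a ^ m) :
    (Real.log b / Real.log a) * p - K ≤ m := by
  have hpow : (b : ℝ) ^ p ≤ (a : ℝ) ^ (K + m) := by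
    rw [pow_add]
    exact_mod_cast h.trans (Nat.mul_le_mul_right _ (Nat.lt_pow_self ha).le)
  have hlog := Real.log_le_log (by positivity) hpow
  rw [Real.log_pow, Real.log_pow] at hlog
  have hla : 0 < Real.log a := Real.log_pos (by exact_mod_cast ha)
  rw [div_mul_eq_mul_div, sub_le_iff_le_add, div_le_iff₀ hla]
  push_cast at hlog
  linarith

/-- Let `α, β > 1` be multiplicatively independent, `l ≥ 2`, `z₁,…,z_l ∈ {α, β}` with
`z₁ = α`, `z₂ = β`, `c₁,…,c_l` non-zero integers and `d ∈ ℤ`. Let `S` be the set of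
`(n₁,…,n_l) ∈ ℕ^l` with (a) `c₁·z₁^{n₁} + ⋯ + c_l·z_l^{n_l} = d`,
(b) `z₁^{n₁}, z₂^{n₂} ≥ z₃^{n₃} ≥ ⋯ ≥ z_l^{n_l}`, and (c) no proper non-empty sub-sum of the
left-hand side of (a) vanishes. Then there are rationals `ξ₁, ξ₂` such that every solution in
`S` satisfies `n₁ ≥ (log β / log α)·n₂ − ξ₁` and `n₂ ≥ (log α / log β)·n₁ − ξ₂`. -/
theorem exponents_almost_proportional (α β : ℕ) (hα : 1 < α) (hβ : 1 < β)
    (l : ℕ) (hl : 2 ≤ l) (z : Fin l → ℕ)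
    (hz1 : z ⟨0, by omega⟩ = α) (hz2 : z ⟨1, by omega⟩ = β)
    (c : Fin l → ℤ) (hc : ∀ i, c i ≠ 0) (d : ℤ)
    (S : Set (Fin l → ℕ))
    (hS : S = {n : Fin l → ℕ |
      (∑ i, c i * (z i : ℤ) ^ (n i)) = d ∧
      (∀ j : Fin l, (j : ℕ) = 2 →
        z j ^ n j ≤ z ⟨0, by omega⟩ ^ n ⟨0, by omega⟩ ∧
        z j ^ n j ≤ z ⟨1, by omega⟩ ^ n ⟨1, by omega⟩) ∧
      (∀ i j : Fin l, 2 ≤ (i : ℕ) → (j : ℕ) = (i : ℕ) + 1 → z j ^ n j ≤ z i ^ n i) ∧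
      (∀ I : Finset (Fin l), I.Nonempty → I ≠ Finset.univ →
        (∑ i ∈ I, c i * (z i : ℤ) ^ (n i)) ≠ 0)}) :
    ∃ ξ₁ ξ₂ : ℚ, ∀ n ∈ S,
      ((n ⟨0, by omega⟩ : ℝ) ≥
        (Real.log β / Real.log α) * (n ⟨1, by omega⟩ : ℝ) - (ξ₁ : ℝ)) ∧
      ((n ⟨1, by omega⟩ : ℝ) ≥
        (Real.log α / Real.log β) * (n ⟨0, by omega⟩ : ℝ) - (ξ₂ : ℝ)) := by
  subst hS
  set K : ℕ := d.natAbs + ∑ i, (c i).natAbs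
  refine ⟨K, K, ?_⟩
  rintro n ⟨hsum, hthird, hchain, -⟩
  have hsum' : ∑ i, c i * ((z i ^ n i : ℕ) : ℤ) = d := by push_cast; exact hsum
  obtain ⟨hle₀, hle₁⟩ := le_lead_terms_of_chain hl hthird hchain
  have hβα := le_mul_of_sum_mul_eq hsum' (hc _)
    (by rw [hz1]; exact Nat.one_le_pow _ _ (by omega)) hle₀
  have hαβ := le_mul_of_sum_mul_eq hsum' (hc _)
    (by rw [hz2]; exact Nat.one_le_pow _ _ (by omega)) hle₁
  rw [hz1, hz2] at hβα hαβ
  push_cast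
  exact ⟨sub_le_of_pow_le_mul_pow hα (by omega) hβα, sub_le_of_pow_le_mul_pow hβ (by omega) hαβ⟩
end

section
/- Let α, β ∈ ℕ with α, β > 1 be multiplicatively independent. Then there exists a prime number p such that ν_p(β) > 0 and log(α)/log(β) > ν_p(α)/ν_p(β), where ν_p(x) denotes the p-adic valuation of x (the largest n such that p^n divides x). -/
/-!
Choose the prime factor `p` of `β` minimising `ν_p(α) / ν_p(β)`. Comparing valuations at every
prime then gives `β ^ ν_p(α) ∣ α ^ ν_p(β)`, so `β ^ ν_p(α) ≤ α ^ ν_p(β)`; multiplicative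
independence makes this strict, and taking logarithms gives the inequality.
-/

open Real

namespace Nat

theorem factorization_pos_of_mem_primeFactors {n p : ℕ} (hp : p ∈ n.primeFactors) :
    0 < n.factorization p :=
  pos_iff_ne_zero.mpr <| Finsupp.mem_support_iff.mp (show p ∈ n.factorization.support from hp)

theorem pow_dvd_pow_of_forall_mul_factorization_le {a b m n : ℕ} (ha : a ≠ 0) (hb : b ≠ 0)
    (h : ∀ q ∈ b.primeFactors, m * b.factorization q ≤ n * a.factorization q) :
    b ^ m ∣ a ^ n := by
  rw [← factorization_le_iff_dvd (pow_ne_zero _ hb) (pow_ne_zero _ ha)]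
  intro q
  simp only [factorization_pow, Finsupp.smul_apply, smul_eq_mul]
  by_cases hq : q ∈ b.primeFactors
  · exact h q hq
  · simp [Finsupp.notMem_support_iff.mp (show q ∉ b.factorization.support from hq)]

theorem exists_mem_primeFactors_forall_factorization_ratio_le (a : ℕ) {b : ℕ} (hb : 1 < b) :
    ∃ p ∈ b.primeFactors, ∀ q ∈ b.primeFactors,
      a.factorization p * b.factorization q ≤ b.factorization p * a.factorization q := by
  obtain ⟨p, hp, hmin⟩ := b.primeFactors.exists_min_image
    (fun q => (a.factorization q : ℚ) / b.factorization q) (nonempty_primeFactors.mpr hb)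
  refine ⟨p, hp, fun q hq => ?_⟩
  have hpos : ∀ r ∈ b.primeFactors, (0 : ℚ) < b.factorization r := fun r hr => by
    exact_mod_cast factorization_pos_of_mem_primeFactors hr
  have hle := hmin q hq
  rw [div_le_div_iff₀ (hpos p hp) (hpos q hq)] at hle
  rw [mul_comm (b.factorization p)]
  exact_mod_cast hle

end Nat

theorem div_lt_log_div_log_of_pow_lt {x y : ℝ} {m n : ℕ} (hy : 1 < y) (hn : 0 < n)
    (h : y ^ m < x ^ n) : (m : ℝ) / n < log x / log y := by
  have hlog : log (y ^ m) < log (x ^ n) := log_lt_log (by positivity) h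
  rw [log_pow, log_pow] at hlog
  rw [div_lt_div_iff₀ (by exact_mod_cast hn) (log_pos hy)]
  linarith

/-- Let `α, β > 1` be multiplicatively independent natural numbers. Then there is a prime `p`
with `ν_p(β) > 0` and `log(α)/log(β) > ν_p(α)/ν_p(β)`. -/
theorem exists_good_prime (α β : ℕ) (hα : 1 < α) (hβ : 1 < β)
    (hind : ∀ n₁ n₂ : ℕ, α ^ n₁ = β ^ n₂ → n₁ = 0 ∧ n₂ = 0) :
    ∃ p : ℕ, p.Prime ∧ 0 < padicValNat p β ∧
      (padicValNat p α : ℝ) / (padicValNat p β : ℝ) < Real.log α / Real.log β := by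
  obtain ⟨p, hp, hmin⟩ := Nat.exists_mem_primeFactors_forall_factorization_ratio_le α hβ
  have hpos : 0 < β.factorization p := Nat.factorization_pos_of_mem_primeFactors hp
  have hdvd : β ^ α.factorization p ∣ α ^ β.factorization p :=
    Nat.pow_dvd_pow_of_forall_mul_factorization_le (by omega) (by omega) hmin
  have hlt : β ^ α.factorization p < α ^ β.factorization p := by
    refine (Nat.le_of_dvd (by positivity) hdvd).lt_of_ne fun heq => ?_
    exact hpos.ne' (hind _ _ heq.symm).1
  have hprime := Nat.prime_of_mem_primeFactors hp
  rw [Nat.factorization_def β hprime] at hpos hlt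
  rw [Nat.factorization_def α hprime] at hlt
  refine ⟨p, hprime, hpos, div_lt_log_div_log_of_pow_lt (by exact_mod_cast hβ) hpos ?_⟩
  exact_mod_cast hlt
end

section
/- (Pumping Lemma.) Suppose we are given: ℚ-linear forms h₁,…,h_r in l ≥ 1 variables; multiplicatively independent α, β ∈ ℕ with α, β > 1; z₁,…,z_l with each z_i ∈ {α, β} and z₁ = β; natural numbers m₁,…,m_l; and a rational ε > 0. Let J = {j ∈ {1,…,r} : h_j(z₁^{m₁},…,z_l^{m_l}) > 0}. Then there exist rationals μ > 0 and δ > 0 with the following property: for every n₁ > m₁ for which there exists k ∈ ℕ with |α^k/β^{n₁} − μ| < δ, there exist n₂,…,n_l ∈ ℕ such that for all 1 ≤ j ≤ r: (i) if j ∈ J then h_j(z₁^{n₁},…,z_l^{n_l}) > 0, and (ii) |h_j(z₁^{n₁},…,z_l^{n_l})/z₁^{n₁} − h_j(z₁^{m₁},…,z_l^{m_l})/z₁^{m₁}| < ε. Moreover, there exist infinitely many n₁ ∈ ℕ that can be extended to a tuple (n₁,…,n_l) satisfying (i) and (ii) for all 1 ≤ j ≤ r. -/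
open Real

private lemma pump_aux_inv (η : ℝ) (hη : 0 < η) : 1 - η ≤ (1 + η)⁻¹ := by
  have h1 : (0:ℝ) < 1 + η := by linarith
  nlinarith [mul_inv_cancel₀ h1.ne', sq_nonneg η, inv_pos.mpr h1]

lemma pump_dio (α β : ℕ) (hα : 1 < α) (hβ : 1 < β)
    (hind : ∀ n₁ n₂ : ℕ, α ^ n₁ = β ^ n₂ → n₁ = 0 ∧ n₂ = 0)
    (η : ℚ) (hη : 0 < η) (N : ℕ) :
    ∃ t : ℕ, N < t ∧ ∃ k : ℕ, |(α : ℚ) ^ k / (β : ℚ) ^ t - 1| < η := by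
  have hαR : (1 : ℝ) < (α : ℝ) := by exact_mod_cast hα
  have hβR : (1 : ℝ) < (β : ℝ) := by exact_mod_cast hβ
  set la := Real.log α with hla_def
  set lb := Real.log β with hlb_def
  have hla : 0 < la := Real.log_pos hαR
  have hlb : 0 < lb := Real.log_pos hβR
  set ξ : ℝ := lb / la with hξ_def
  have hξpos : 0 < ξ := div_pos hlb hla
  -- no positive multiple of ξ is an integer
  have hnotint : ∀ k : ℕ, 0 < k → ∀ j : ℤ, (k : ℝ) * ξ ≠ (j : ℝ) := by
    intro k hk j hkj
    have hklb : (k : ℝ) * lb = (j : ℝ) * la := by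
      have e1 : (k : ℝ) * lb = ((k : ℝ) * ξ) * la := by
        rw [hξ_def, mul_assoc, div_mul_cancel₀ _ hla.ne']
      rw [e1, hkj]
    have hj0 : 0 < j := by
      by_contra hj
      push_neg at hj
      have : (j : ℝ) * la ≤ 0 :=
        mul_nonpos_of_nonpos_of_nonneg (by exact_mod_cast hj) hla.le
      have : 0 < (k : ℝ) * lb := by positivity
      linarith
    have hjn : (j.toNat : ℝ) * la = (k : ℝ) * lb := by
      have : ((j.toNat : ℤ) : ℝ) = (j : ℝ) := by rw [Int.toNat_of_nonneg hj0.le]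
      push_cast at this ⊢
      rw [this]; linarith [hklb]
    have hpow : (α : ℝ) ^ j.toNat = (β : ℝ) ^ k := by
      have h1 : Real.log ((α : ℝ) ^ j.toNat) = Real.log ((β : ℝ) ^ k) := by
        rw [Real.log_pow, Real.log_pow]
        push_cast
        rw [← hla_def, ← hlb_def]
        linarith [hjn]
      have ha : (0 : ℝ) < (α : ℝ) ^ j.toNat := by positivity
      have hb : (0 : ℝ) < (β : ℝ) ^ k := by positivity
      exact Real.log_injOn_pos (Set.mem_Ioi.mpr ha) (Set.mem_Ioi.mpr hb) h1
    have hnat : α ^ j.toNat = β ^ k := by exact_mod_cast hpow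
    exact hk.ne' ((hind _ _ hnat).2)
  -- target logarithmic accuracy
  set ηlog : ℝ := Real.log (1 + (η : ℝ)) with hηlog_def
  have hηR : (0 : ℝ) < (η : ℝ) := by exact_mod_cast hη
  have hηlog : 0 < ηlog := Real.log_pos (by linarith)
  -- threshold K₀
  set K₀ : ℕ := max N ⌈1/ξ⌉₊ + 1 with hK₀_def
  have hK₀1 : 1 ≤ K₀ := by omega
  have hFne : (Finset.Icc 1 K₀).Nonempty := ⟨1, Finset.mem_Icc.mpr ⟨le_refl 1, hK₀1⟩⟩
  set δ₀ : ℝ := (Finset.Icc 1 K₀).inf' hFne (fun k => |(k : ℝ) * ξ - round ((k : ℝ) * ξ)|)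
    with hδ₀_def
  have hδ₀ : 0 < δ₀ := by
    rw [hδ₀_def, Finset.lt_inf'_iff]
    intro k hk
    rw [abs_pos, sub_ne_zero]
    exact hnotint k (by simp at hk; omega) _
  -- choose n large
  obtain ⟨n, hn⟩ := exists_nat_gt (max (1/δ₀) (la / ηlog))
  have hn1 : 1/δ₀ < (n : ℝ) := lt_of_le_of_lt (le_max_left _ _) hn
  have hn2 : la / ηlog < (n : ℝ) := lt_of_le_of_lt (le_max_right _ _) hn
  have hnpos : 0 < n := by
    by_contra hn0
    push_neg at hn0
    interval_cases n
    simp at hn1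
    have : 0 < 1/δ₀ := by positivity
    linarith
  obtain ⟨k, hk0, hkn, hkr⟩ := Real.exists_nat_abs_mul_sub_round_le ξ hnpos
  have hn1' : 1 / ((n : ℝ) + 1) < δ₀ := by
    rw [div_lt_iff₀ (by positivity)]
    rw [div_lt_iff₀ hδ₀] at hn1
    nlinarith
  have hkK : K₀ < k := by
    by_contra hkK
    push_neg at hkK
    have hmem : k ∈ Finset.Icc 1 K₀ := Finset.mem_Icc.mpr ⟨hk0, hkK⟩
    have := Finset.inf'_le (f := fun k : ℕ => |(k : ℝ) * ξ - round ((k : ℝ) * ξ)|) hmem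
    rw [← hδ₀_def] at this
    linarith [hkr.trans_lt hn1']
  set j : ℤ := round ((k : ℝ) * ξ) with hj_def
  -- j is positive
  have hkξ : 1 < (k : ℝ) * ξ := by
    have h1 : 1/ξ ≤ (⌈1/ξ⌉₊ : ℝ) := Nat.le_ceil _
    have h2 : (⌈1/ξ⌉₊ : ℝ) < (k : ℝ) := by
      have : ⌈1/ξ⌉₊ < k := by omega
      exact_mod_cast this
    have := (div_lt_iff₀ hξpos).mp (h1.trans_lt h2)
    linarith
  have hhalf : |(k : ℝ) * ξ - (j : ℝ)| ≤ 1/2 := by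
    have : 1 / ((n : ℝ) + 1) ≤ 1/2 := by
      have : (1 : ℝ) ≤ (n : ℝ) := by exact_mod_cast hnpos
      rw [div_le_div_iff₀ (by positivity) (by norm_num)]
      linarith
    linarith [hkr]
  have hj0 : 0 < j := by
    by_contra hj
    push_neg at hj
    have : (j : ℝ) ≤ 0 := by exact_mod_cast hj
    have := abs_le.mp hhalf
    linarith
  -- the key log estimate
  have hloglt : |(j.toNat : ℝ) * la - (k : ℝ) * lb| < ηlog := by
    have hjr : ((j.toNat : ℝ)) = (j : ℝ) := by
      rw [← Int.toNat_of_nonneg hj0.le]; push_cast; rw [Int.toNat_of_nonneg hj0.le]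
    have hexp : (k : ℝ) * lb = la * ((k : ℝ) * ξ) := by
      rw [hξ_def, mul_comm la, mul_assoc, div_mul_cancel₀ _ hla.ne']
    have : |(j.toNat : ℝ) * la - (k : ℝ) * lb| = la * |(k : ℝ) * ξ - (j : ℝ)| := by
      rw [hjr, hexp, abs_sub_comm, ← abs_of_pos hla, ← abs_mul, mul_sub,
        mul_comm la ((j : ℝ)), abs_of_pos hla]
    rw [this]
    calc la * |(k : ℝ) * ξ - (j : ℝ)| ≤ la * (1 / ((n : ℝ) + 1)) := by
          exact mul_le_mul_of_nonneg_left hkr hla.le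
      _ < ηlog := by
          rw [div_lt_iff₀ (by positivity)] at hn2
          rw [mul_one_div, div_lt_iff₀ (by positivity)]
          nlinarith
  refine ⟨k, by omega, j.toNat, ?_⟩
  -- convert to the rational inequality
  have hx : ((α : ℝ)) ^ j.toNat / ((β : ℝ)) ^ k = Real.exp ((j.toNat : ℝ) * la - (k : ℝ) * lb) := by
    rw [Real.exp_sub, Real.exp_nat_mul, Real.exp_nat_mul, hla_def, hlb_def,
      Real.exp_log (by positivity), Real.exp_log (by positivity)]
  have habs := abs_lt.mp hloglt
  have hxub : ((α : ℝ)) ^ j.toNat / ((β : ℝ)) ^ k < 1 + (η : ℝ) := by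
    rw [hx, ← Real.exp_log (show (0:ℝ) < 1 + (η : ℝ) by linarith)]
    exact Real.exp_lt_exp.mpr habs.2
  have hxlb : (1 + (η : ℝ))⁻¹ < ((α : ℝ)) ^ j.toNat / ((β : ℝ)) ^ k := by
    rw [hx, ← Real.exp_log (show (0:ℝ) < (1 + (η : ℝ))⁻¹ by positivity)]
    apply Real.exp_lt_exp.mpr
    rw [Real.log_inv]
    linarith [habs.1]
  have hinv : 1 - (η : ℝ) ≤ (1 + (η : ℝ))⁻¹ := pump_aux_inv _ hηR
  have hreal : |((α : ℝ)) ^ j.toNat / ((β : ℝ)) ^ k - 1| < (η : ℝ) := by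
    rw [abs_sub_lt_iff]
    constructor
    · linarith
    · linarith [hxlb, hinv]
  have hcast : ((|((α : ℚ)) ^ j.toNat / ((β : ℚ)) ^ k - 1| : ℚ) : ℝ)
      = |((α : ℝ)) ^ j.toNat / ((β : ℝ)) ^ k - 1| := by
    push_cast
    ring_nf
  exact_mod_cast hcast ▸ hreal


theorem pump_exists_P (r : ℕ) (Sm : Fin r → ℚ) (μ ε : ℚ) (hμ : 0 < μ) (hε : 0 < ε) :
    ∃ P : ℚ, 0 < P ∧ P ≤ ε ∧ ∀ j, 0 < Sm j → P ≤ μ * Sm j := by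
  let s : Finset ℚ :=
    insert ε ((Finset.univ.filter (fun j => 0 < Sm j)).image (fun j => μ * Sm j))
  have hsne : s.Nonempty := ⟨ε, Finset.mem_insert_self _ _⟩
  refine ⟨s.min' hsne, ?_, ?_, ?_⟩
  · have hmem := s.min'_mem hsne
    rcases Finset.mem_insert.mp hmem with h' | h'
    · rw [h']; exact hε
    · obtain ⟨j, hj, hje⟩ := Finset.mem_image.mp h'
      rw [← hje]
      exact mul_pos hμ (Finset.mem_filter.mp hj).2
  · exact Finset.min'_le s _ (Finset.mem_insert_self _ _)
  · exact fun j hj => Finset.min'_le s _ (Finset.mem_insert_of_mem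
      (Finset.mem_image_of_mem _ (Finset.mem_filter.mpr ⟨Finset.mem_univ _, hj⟩)))


set_option maxHeartbeats 1000000 in
/-- **Pumping Lemma.** Given `ℚ`-linear forms `h₁,…,h_r` in `l ≥ 1` variables (given by their
coefficients `h j i`), multiplicatively independent `α, β > 1`, `z₁,…,z_l ∈ {α, β}` with
`z₁ = β`, values `m₁,…,m_l ∈ ℕ` and a rational `ε > 0`, there exist rationals `μ, δ > 0` such
that every `n₁ > m₁` admitting `k ∈ ℕ` with `|α^k/β^{n₁} − μ| < δ` can be extended to
`(n₁,…,n_l)` with: (i) whenever `h_j(z₁^{m₁},…,z_l^{m_l}) > 0` also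
`h_j(z₁^{n₁},…,z_l^{n_l}) > 0`, and (ii)
`|h_j(z₁^{n₁},…,z_l^{n_l})/z₁^{n₁} − h_j(z₁^{m₁},…,z_l^{m_l})/z₁^{m₁}| < ε`; moreover,
infinitely many `n₁` admit such an extension. -/
theorem pumping_lemma (r l : ℕ) (hl : 1 ≤ l) (h : Fin r → Fin l → ℚ)
    (α β : ℕ) (hα : 1 < α) (hβ : 1 < β)
    (hind : ∀ n₁ n₂ : ℕ, α ^ n₁ = β ^ n₂ → n₁ = 0 ∧ n₂ = 0)
    (z : Fin l → ℕ) (hz : ∀ i, z i = α ∨ z i = β) (hz1 : z ⟨0, hl⟩ = β)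
    (m : Fin l → ℕ) (ε : ℚ) (hε : 0 < ε) :
    ∃ μ δ : ℚ, 0 < μ ∧ 0 < δ ∧
      (∀ n₁ : ℕ, m ⟨0, hl⟩ < n₁ →
        (∃ k : ℕ, |(α : ℚ) ^ k / (β : ℚ) ^ n₁ - μ| < δ) →
        ∃ n : Fin l → ℕ, n ⟨0, hl⟩ = n₁ ∧
          ∀ j : Fin r,
            (0 < ∑ i, h j i * ((z i : ℚ) ^ (m i)) →
              0 < ∑ i, h j i * ((z i : ℚ) ^ (n i))) ∧
            |(∑ i, h j i * ((z i : ℚ) ^ (n i))) / (z ⟨0, hl⟩ : ℚ) ^ (n ⟨0, hl⟩) -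
              (∑ i, h j i * ((z i : ℚ) ^ (m i))) / (z ⟨0, hl⟩ : ℚ) ^ (m ⟨0, hl⟩)| < ε) ∧
      {n₁ : ℕ | ∃ n : Fin l → ℕ, n ⟨0, hl⟩ = n₁ ∧
        ∀ j : Fin r,
          (0 < ∑ i, h j i * ((z i : ℚ) ^ (m i)) →
            0 < ∑ i, h j i * ((z i : ℚ) ^ (n i))) ∧
          |(∑ i, h j i * ((z i : ℚ) ^ (n i))) / (z ⟨0, hl⟩ : ℚ) ^ (n ⟨0, hl⟩) -
            (∑ i, h j i * ((z i : ℚ) ^ (m i))) / (z ⟨0, hl⟩ : ℚ) ^ (m ⟨0, hl⟩)| < ε}.Infinite := by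
  classical
  have hαβ : α ≠ β := fun hab => by
    have := (hind 1 1 (by rw [hab])).1
    omega
  have hB1 : (1 : ℚ) < (β : ℚ) := by exact_mod_cast hβ
  have hB0 : (0 : ℚ) < (β : ℚ) := by linarith
  set i0 : Fin l := ⟨0, hl⟩ with hi0_def
  set m₁ : ℕ := m i0 with hm₁_def
  set μ : ℚ := ((β : ℚ) ^ m₁)⁻¹ with hμ_def
  have hμ : 0 < μ := by positivity
  have hzpos : ∀ i, (0 : ℚ) < (z i : ℚ) := by
    intro i
    rcases hz i with h' | h' <;> rw [h'] <;> [exact_mod_cast Nat.lt_trans Nat.zero_lt_one hα;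
      exact_mod_cast Nat.lt_trans Nat.zero_lt_one hβ]
  set C : ℚ := (∑ j, ∑ i, |h j i| * ((z i : ℚ)) ^ (m i)) + 1 with hC_def
  have hC1 : (1 : ℚ) ≤ C := by
    rw [hC_def]
    have : (0:ℚ) ≤ ∑ j, ∑ i, |h j i| * ((z i : ℚ)) ^ (m i) :=
      Finset.sum_nonneg fun j _ => Finset.sum_nonneg fun i _ => by positivity
    linarith
  have hC0 : (0 : ℚ) < C := lt_of_lt_of_le one_pos hC1
  have hCj : ∀ j : Fin r, (∑ i, |h j i| * ((z i : ℚ)) ^ (m i)) ≤ C := by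
    intro j
    have h1 := Finset.single_le_sum
      (f := fun j : Fin r => ∑ i, |h j i| * ((z i : ℚ)) ^ (m i))
      (fun a _ => Finset.sum_nonneg fun i _ => by positivity) (Finset.mem_univ j)
    rw [hC_def]; linarith
  set Sm : Fin r → ℚ := fun j => ∑ i, h j i * ((z i : ℚ)) ^ (m i) with hSm_def
  obtain ⟨P, hP0, hPε, hPj⟩ := pump_exists_P r Sm μ ε hμ hε
  set δ : ℚ := P / (2 * C) with hδ_def
  have hδ0 : 0 < δ := by positivity
  have hδC : δ * C = P / 2 := by
    rw [hδ_def]; field_simp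
  -- the key construction
  have key : ∀ n₁ : ℕ, m₁ < n₁ →
      (∃ k : ℕ, |(α : ℚ) ^ k / (β : ℚ) ^ n₁ - μ| < δ) →
      ∃ n : Fin l → ℕ, n i0 = n₁ ∧
        ∀ j : Fin r,
          (0 < ∑ i, h j i * ((z i : ℚ) ^ (m i)) →
            0 < ∑ i, h j i * ((z i : ℚ) ^ (n i))) ∧
          |(∑ i, h j i * ((z i : ℚ) ^ (n i))) / (z i0 : ℚ) ^ (n i0) -
            (∑ i, h j i * ((z i : ℚ) ^ (m i))) / (z i0 : ℚ) ^ (m i0)| < ε := by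
    intro n₁ hn₁ hex
    obtain ⟨k, hk⟩ := hex
    set e : ℚ := (α : ℚ) ^ k / (β : ℚ) ^ n₁ - μ with he_def
    set n : Fin l → ℕ := fun i => if z i = α then m i + k else m i + (n₁ - m₁) with hn_def
    have hn0 : n i0 = n₁ := by
      show (if z i0 = α then m i0 + k else m i0 + (n₁ - m₁)) = n₁
      rw [hz1, if_neg (fun hh => hαβ hh.symm)]
      omega
    set Aj : Fin r → ℚ :=
      fun j => ∑ i, (if z i = α then h j i * ((z i : ℚ)) ^ (m i) else 0) with hAj_def
    have hAjC : ∀ j, |Aj j| ≤ C := by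
      intro j
      calc |Aj j| ≤ ∑ i, |if z i = α then h j i * ((z i : ℚ)) ^ (m i) else 0| :=
            Finset.abs_sum_le_sum_abs _ _
        _ ≤ ∑ i, |h j i| * ((z i : ℚ)) ^ (m i) := by
            apply Finset.sum_le_sum
            intro i _
            by_cases hzi : z i = α
            · rw [if_pos hzi, abs_mul, abs_of_nonneg (le_of_lt (pow_pos (hzpos i) (m i)))]
            · rw [if_neg hzi, abs_zero]
              positivity
        _ ≤ C := hCj j
    have hBn0 : ((β : ℚ)) ^ n₁ ≠ 0 := by positivity
    have hSn : ∀ j, (∑ i, h j i * ((z i : ℚ) ^ (n i)))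
        = (β : ℚ) ^ n₁ * (μ * Sm j + e * Aj j) := by
      intro j
      have hterm : ∀ i : Fin l, h j i * ((z i : ℚ) ^ (n i))
          = (β : ℚ) ^ n₁ * (μ * (h j i * ((z i : ℚ)) ^ (m i))
            + e * (if z i = α then h j i * ((z i : ℚ)) ^ (m i) else 0)) := by
        intro i
        by_cases hzi : z i = α
        · have hni : n i = m i + k := by rw [hn_def]; simp [hzi]
          rw [hni, if_pos hzi, hzi]
          have hμe : μ + e = (α : ℚ) ^ k / (β : ℚ) ^ n₁ := by rw [he_def]; ring
          have : (β : ℚ) ^ n₁ * (μ * (h j i * ((α : ℚ)) ^ (m i))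
              + e * (h j i * ((α : ℚ)) ^ (m i)))
              = (β : ℚ) ^ n₁ * ((μ + e) * (h j i * ((α : ℚ)) ^ (m i))) := by ring
          rw [this, hμe, pow_add]
          field_simp
        · have hzi' : z i = β := (hz i).resolve_left hzi
          have hni : n i = m i + (n₁ - m₁) := by rw [hn_def]; simp [hzi]
          rw [hni, if_neg hzi, hzi']
          have hpow : ((β : ℚ)) ^ (m i + (n₁ - m₁)) * ((β : ℚ)) ^ m₁
              = (β : ℚ) ^ n₁ * ((β : ℚ)) ^ (m i) := by
            rw [← pow_add, ← pow_add]
            congr 1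
            omega
          rw [hμ_def]
          rw [mul_zero, add_zero]
          have hBm0 : ((β : ℚ)) ^ m₁ ≠ 0 := by positivity
          field_simp
          linear_combination (h j i) * hpow
      simp only [hSm_def, hAj_def]
      calc (∑ i, h j i * ((z i : ℚ) ^ (n i)))
          = ∑ i, (β : ℚ) ^ n₁ * (μ * (h j i * ((z i : ℚ)) ^ (m i))
              + e * (if z i = α then h j i * ((z i : ℚ)) ^ (m i) else 0)) :=
            Finset.sum_congr rfl (fun i _ => hterm i)
        _ = (β : ℚ) ^ n₁ * ((μ * ∑ i, h j i * ((z i : ℚ)) ^ (m i))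
              + e * ∑ i, (if z i = α then h j i * ((z i : ℚ)) ^ (m i) else 0)) := by
            rw [← Finset.mul_sum]
            congr 1
            rw [Finset.sum_add_distrib, ← Finset.mul_sum, ← Finset.mul_sum]
    clear_value μ Sm C δ e n Aj
    refine ⟨n, hn0, fun j => ?_⟩
    have heabs : |e| < δ := hk
    have heAj : |e * Aj j| ≤ P / 2 := by
      rw [abs_mul, ← hδC]
      exact mul_le_mul heabs.le (hAjC j) (abs_nonneg _) hδ0.le
    have heAj' : -(P/2) ≤ e * Aj j ∧ e * Aj j ≤ P/2 := abs_le.mp heAj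
    constructor
    · intro hj
      have hP2 : P ≤ μ * Sm j := hPj j (by rw [hSm_def]; exact hj)
      have hpos : 0 < μ * Sm j + e * Aj j := by
        have h2 := add_le_add hP2 heAj'.1
        nlinarith [h2, hP0]
      rw [hSn j]
      exact mul_pos (by positivity) hpos
    · have hzi0 : (z i0 : ℚ) = (β : ℚ) := by rw [hz1]
      rw [hSn j, hn0, hzi0]
      have hcalc : (β : ℚ) ^ n₁ * (μ * Sm j + e * Aj j) / (β : ℚ) ^ n₁
          - Sm j / (β : ℚ) ^ m₁ = e * Aj j := by
        rw [hμ_def]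
        field_simp
        ring
      rw [show (∑ i, h j i * ((z i : ℚ) ^ (m i))) = Sm j by rw [hSm_def], hcalc]
      calc |e * Aj j| ≤ P / 2 := heAj
        _ < P := by linarith
        _ ≤ ε := hPε
  refine ⟨μ, δ, hμ, hδ0, key, ?_⟩
  -- infinitude
  by_contra hfin
  rw [Set.not_infinite] at hfin
  obtain ⟨N, hN⟩ := hfin.bddAbove
  obtain ⟨t, htN, k, hkt⟩ := pump_dio α β hα hβ hind (δ * (β : ℚ) ^ m₁)
    (by positivity) (N + m₁)
  have ht1 : m₁ < m₁ + t := by omega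
  have hkcond : |(α : ℚ) ^ k / (β : ℚ) ^ (m₁ + t) - μ| < δ := by
    have hfact : (α : ℚ) ^ k / (β : ℚ) ^ (m₁ + t) - μ
        = ((α : ℚ) ^ k / (β : ℚ) ^ t - 1) * μ := by
      rw [hμ_def, pow_add]
      field_simp
    rw [hfact, abs_mul, abs_of_pos hμ]
    calc |(α : ℚ) ^ k / (β : ℚ) ^ t - 1| * μ < (δ * (β : ℚ) ^ m₁) * μ := by
          exact mul_lt_mul_of_pos_right hkt hμ
      _ = δ := by
          rw [hμ_def, mul_assoc, mul_inv_cancel₀ (by positivity), mul_one]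
  obtain ⟨n, hn0, hn⟩ := key (m₁ + t) ht1 ⟨k, hkcond⟩
  have hmem : m₁ + t ∈ {n₁ : ℕ | ∃ n : Fin l → ℕ, n ⟨0, hl⟩ = n₁ ∧
      ∀ j : Fin r,
        (0 < ∑ i, h j i * ((z i : ℚ) ^ (m i)) →
          0 < ∑ i, h j i * ((z i : ℚ) ^ (n i))) ∧
        |(∑ i, h j i * ((z i : ℚ) ^ (n i))) / (z ⟨0, hl⟩ : ℚ) ^ (n ⟨0, hl⟩) -
          (∑ i, h j i * ((z i : ℚ) ^ (m i))) / (z ⟨0, hl⟩ : ℚ) ^ (m ⟨0, hl⟩)| < ε} :=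
    ⟨n, hn0, hn⟩
  have := hN hmem
  omega
end

section
/- Let α, β ∈ ℕ with α, β > 1 be multiplicatively independent, let z₁,…,z_l ∈ {α, β}, let A ∈ ℤ^{r×l} be a matrix, and let b ∈ ℤ^r with every entry of b non-negative. Then there exist natural numbers m₁,…,m_l such that every entry of A·(z₁^{m₁},…,z_l^{m_l}) is strictly positive if and only if there exist natural numbers n₁,…,n_l such that every entry of A·(z₁^{n₁},…,z_l^{n_l}) is strictly greater than the corresponding entry of b. -/
set_option maxHeartbeats 1000000

open Real Finset

/-- For irrational `θ`, there are arbitrarily large `k : ℕ` with `k*θ` arbitrarily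
close to an integer. -/
lemma rot_aux (θ : ℝ) (hθ : Irrational θ) (ε : ℝ) (hε : 0 < ε) (N : ℕ) :
    ∃ k : ℕ, N < k ∧ |(k : ℝ) * θ - round ((k : ℝ) * θ)| < ε := by
  set g : ℕ → ℝ := fun k => |(k : ℝ) * θ - round ((k : ℝ) * θ)| with hg
  have hgpos : ∀ k : ℕ, 1 ≤ k → 0 < g k := by
    intro k hk
    have hirr : Irrational ((k : ℝ) * θ) := hθ.natCast_mul (by omega)
    have := hirr.ne_int (round ((k : ℝ) * θ))
    simpa [hg, abs_pos, sub_ne_zero] using this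
  set s : Finset ℝ := insert ε ((Finset.Icc 1 N).image g) with hs
  have hsne : s.Nonempty := ⟨ε, Finset.mem_insert_self _ _⟩
  set δ : ℝ := s.min' hsne with hδdef
  have hδpos : 0 < δ := by
    have hmem := s.min'_mem hsne
    rcases Finset.mem_insert.1 hmem with h | h
    · rw [hδdef] at *; rw [h]; exact hε
    · obtain ⟨k, hk, hks⟩ := Finset.mem_image.1 h
      rw [hδdef] at *
      rw [← hks]
      exact hgpos k (Finset.mem_Icc.1 hk).1
  obtain ⟨n, hn⟩ := exists_nat_one_div_lt hδpos
  obtain ⟨j, k, hk0, hkn, hjk⟩ := Real.exists_int_int_abs_mul_sub_le θ (Nat.succ_pos n)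
  have hjk' : |(k : ℝ) * θ - j| < δ := by
    refine lt_of_le_of_lt hjk ?_
    calc (1 : ℝ) / ((n + 1 : ℕ) + 1) ≤ 1 / (n + 1) := by
          apply one_div_le_one_div_of_le <;> push_cast <;> linarith
      _ < δ := hn
  set u : ℕ := k.toNat with hu
  have huk : (u : ℝ) = (k : ℝ) := by
    rw [hu]; exact_mod_cast congrArg (Int.cast : ℤ → ℝ) (Int.toNat_of_nonneg hk0.le)
  have hgu : g u < δ := by
    have h1 : g u ≤ |(u : ℝ) * θ - j| := round_le _ j
    rw [huk] at h1
    exact lt_of_le_of_lt h1 hjk'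
  have hδε : δ ≤ ε := Finset.min'_le _ _ (Finset.mem_insert_self _ _)
  have hu1 : 1 ≤ u := by
    rw [hu]; omega
  refine ⟨u, ?_, lt_of_lt_of_le hgu hδε⟩
  by_contra hle
  push_neg at hle
  have : δ ≤ g u := Finset.min'_le _ _ (Finset.mem_insert_of_mem
    (Finset.mem_image.2 ⟨u, Finset.mem_Icc.2 ⟨hu1, hle⟩, rfl⟩))
  linarith

lemma log_ratio_irrational (α β : ℕ) (hα : 1 < α) (hβ : 1 < β)
    (hind : ∀ n₁ n₂ : ℕ, α ^ n₁ = β ^ n₂ → n₁ = 0 ∧ n₂ = 0) :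
    Irrational (Real.log α / Real.log β) := by
  have hla : 0 < Real.log α := Real.log_pos (by exact_mod_cast hα)
  have hlb : 0 < Real.log β := Real.log_pos (by exact_mod_cast hβ)
  rintro ⟨q, hq⟩
  have hq0 : 0 < (q : ℝ) := by rw [hq]; positivity
  have hqpos : 0 < q := by exact_mod_cast hq0
  have hnum : 0 < q.num := Rat.num_pos.2 hqpos
  set u : ℕ := q.den with hu
  set v : ℕ := q.num.toNat with hv
  have hvnum : (v : ℝ) = (q.num : ℝ) := by
    rw [hv]; exact_mod_cast congrArg (Int.cast : ℤ → ℝ) (Int.toNat_of_nonneg hnum.le)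
  have hden : (0:ℝ) < (u : ℝ) := by
    rw [hu]; exact_mod_cast q.pos
  have hqval : (q : ℝ) = (q.num : ℝ) / (q.den : ℝ) := by
    rw [Rat.cast_def]
  have hkey : (u : ℝ) * Real.log α = (v : ℝ) * Real.log β := by
    rw [hvnum]
    have : Real.log α / Real.log β = (q.num : ℝ) / (u : ℝ) := by
      rw [← hq, hqval, hu]
    field_simp at this
    linarith [this]
  have hlog : Real.log ((α : ℝ) ^ u) = Real.log ((β : ℝ) ^ v) := by
    rw [Real.log_pow, Real.log_pow]; exact_mod_cast hkey
  have hαpos : (0:ℝ) < (α : ℝ) ^ u := by positivity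
  have hβpos : (0:ℝ) < (β : ℝ) ^ v := by positivity
  have heq : ((α : ℝ)) ^ u = ((β : ℝ)) ^ v := by
    have := congrArg Real.exp hlog
    rwa [Real.exp_log hαpos, Real.exp_log hβpos] at this
  have heqn : α ^ u = β ^ v := by exact_mod_cast heq
  have := (hind u v heqn).1
  rw [hu] at this
  exact q.den_nz this

/-- There are `p q : ℕ` with `α^p` arbitrarily large and `p log α - q log β`
arbitrarily small. -/
lemma approx_aux (α β : ℕ) (hα : 1 < α) (hβ : 1 < β)
    (hind : ∀ n₁ n₂ : ℕ, α ^ n₁ = β ^ n₂ → n₁ = 0 ∧ n₂ = 0)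
    (ε : ℝ) (hε : 0 < ε) (M : ℕ) :
    ∃ p q : ℕ, M < α ^ p ∧ |(p : ℝ) * Real.log α - (q : ℝ) * Real.log β| < ε := by
  have hla : 0 < Real.log α := Real.log_pos (by exact_mod_cast hα)
  have hlb : 0 < Real.log β := Real.log_pos (by exact_mod_cast hβ)
  set θ : ℝ := Real.log α / Real.log β with hθ
  have hθpos : 0 < θ := by positivity
  have hirr : Irrational θ := log_ratio_irrational α β hα hβ hind
  have hε' : 0 < min (ε / Real.log β) (θ / 2) := by positivity
  obtain ⟨p, hpM, hpr⟩ := rot_aux θ hirr _ hε' M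
  set q' : ℤ := round ((p : ℝ) * θ) with hq'
  have hp1 : (1 : ℝ) ≤ (p : ℝ) := by exact_mod_cast Nat.one_le_iff_ne_zero.2 (by omega)
  have hpθ : θ ≤ (p : ℝ) * θ := by nlinarith
  have hq'pos : 0 < q' := by
    have h1 : |(p : ℝ) * θ - q'| < θ / 2 := lt_of_lt_of_le hpr (min_le_right _ _)
    have h2 : (q' : ℝ) > (p : ℝ) * θ - θ / 2 := by
      cases abs_lt.1 h1; linarith
    have : (0 : ℝ) < (q' : ℝ) := by linarith
    exact_mod_cast this
  set q : ℕ := q'.toNat with hq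
  have hqq' : (q : ℝ) = (q' : ℝ) := by
    rw [hq]; exact_mod_cast congrArg (Int.cast : ℤ → ℝ) (Int.toNat_of_nonneg hq'pos.le)
  refine ⟨p, q, ?_, ?_⟩
  · calc M < p := hpM
      _ < 2 ^ p := Nat.lt_two_pow_self
      _ ≤ α ^ p := Nat.pow_le_pow_left hα p
  · have hcomp : (p : ℝ) * Real.log α - (q : ℝ) * Real.log β
        = Real.log β * ((p : ℝ) * θ - q') := by
      rw [hqq', hθ]; field_simp
    rw [hcomp, abs_mul, abs_of_pos hlb]
    have h1 : |(p : ℝ) * θ - q'| < ε / Real.log β := lt_of_lt_of_le hpr (min_le_left _ _)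
    calc Real.log β * |(p : ℝ) * θ - q'| < Real.log β * (ε / Real.log β) := by
          exact mul_lt_mul_of_pos_left h1 hlb
      _ = ε := by field_simp

/-- Let `α, β > 1` be multiplicatively independent, `z₁,…,z_l ∈ {α, β}`, `A ∈ ℤ^{r×l}`, and
`b ∈ ℤ^r` with all entries non-negative. Then `A·(z₁^{m₁},…,z_l^{m_l}) > 0` has a solution in
naturals `m₁,…,m_l` if and only if `A·(z₁^{n₁},…,z_l^{n_l}) > b` has a solution in naturals
`n₁,…,n_l` (both componentwise). -/
theorem pumping_corollary (α β : ℕ) (hα : 1 < α) (hβ : 1 < β)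
    (hind : ∀ n₁ n₂ : ℕ, α ^ n₁ = β ^ n₂ → n₁ = 0 ∧ n₂ = 0)
    (l r : ℕ) (z : Fin l → ℕ) (hz : ∀ i, z i = α ∨ z i = β)
    (A : Matrix (Fin r) (Fin l) ℤ) (b : Fin r → ℤ) (hb : ∀ i, 0 ≤ b i) :
    (∃ m : Fin l → ℕ, ∀ i, 0 < ∑ j, A i j * (z j : ℤ) ^ (m j)) ↔
      (∃ n : Fin l → ℕ, ∀ i, b i < ∑ j, A i j * (z j : ℤ) ^ (n j)) := by
  constructor
  · rintro ⟨m, h⟩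
    -- split each row sum according to whether z j = α
    set S : Fin r → ℤ := fun i =>
      ∑ j ∈ Finset.univ.filter (fun j => z j = α), A i j * (z j : ℤ) ^ (m j) with hS
    set T : Fin r → ℤ := fun i =>
      ∑ j ∈ Finset.univ.filter (fun j => ¬ z j = α), A i j * (z j : ℤ) ^ (m j) with hT
    have hST : ∀ i, 0 < S i + T i := by
      intro i
      have := h i
      rwa [← Finset.sum_filter_add_sum_filter_not Finset.univ (fun j => z j = α)] at this
    set C : ℤ := 1 + ∑ i, |S i| with hC
    have hC1 : 1 ≤ C := by
      have : (0:ℤ) ≤ ∑ i, |S i| := Finset.sum_nonneg fun i _ => abs_nonneg _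
      omega
    have hCS : ∀ i, |S i| ≤ C := by
      intro i
      have h1 : |S i| ≤ ∑ i, |S i| := Finset.single_le_sum (f := fun i => |S i|)
        (fun i _ => abs_nonneg _) (Finset.mem_univ i)
      omega
    set B : ℤ := 1 + ∑ i, b i with hB
    have hBi : ∀ i, b i < B := by
      intro i
      have := Finset.single_le_sum (f := b) (fun i _ => hb i) (Finset.mem_univ i)
      omega
    have hB1 : 1 ≤ B := by
      have : (0:ℤ) ≤ ∑ i, b i := Finset.sum_nonneg fun i _ => hb i
      omega
    -- choose the approximation
    have hCR : (0:ℝ) < (C : ℝ) := by exact_mod_cast hC1.trans_lt' zero_lt_one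
    have hεpos : 0 < Real.log (1 + 1/(2*(C:ℝ))) := Real.log_pos (by
      have : 0 < 1/(2*(C:ℝ)) := by positivity
      linarith)
    obtain ⟨p, q, hMx, happ⟩ := approx_aux α β hα hβ hind _ hεpos (3*B).toNat
    set x : ℤ := (α : ℤ) ^ p with hx
    set y : ℤ := (β : ℤ) ^ q with hy
    have hx1 : 1 ≤ x := one_le_pow₀ (by exact_mod_cast hα.le)
    have hy1 : 1 ≤ y := one_le_pow₀ (by exact_mod_cast hβ.le)
    have hxM : 3 * B < x := by
      have h1 : ((3*B).toNat : ℤ) < ((α ^ p : ℕ) : ℤ) := by exact_mod_cast hMx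
      rw [Int.toNat_of_nonneg (by omega)] at h1
      rw [hx]; push_cast at h1 ⊢; linarith
    -- real inequalities
    have hXpos : (0:ℝ) < (α:ℝ)^p := by positivity
    have hYpos : (0:ℝ) < (β:ℝ)^q := by positivity
    have hlogX : Real.log ((α:ℝ)^p) = (p:ℝ) * Real.log α := Real.log_pow _ _
    have hlogY : Real.log ((β:ℝ)^q) = (q:ℝ) * Real.log β := Real.log_pow _ _
    have habs := abs_lt.1 happ
    have hr1 : (α:ℝ)^p ≤ (β:ℝ)^q * (1 + 1/(2*(C:ℝ))) := by
      have h1 : Real.log ((α:ℝ)^p) < Real.log ((β:ℝ)^q) + Real.log (1 + 1/(2*(C:ℝ))) := by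
        rw [hlogX, hlogY]; linarith [habs.2]
      have h2 := Real.exp_lt_exp.2 h1
      rw [Real.exp_log hXpos, Real.exp_add, Real.exp_log hYpos,
        Real.exp_log (by positivity)] at h2
      linarith
    have hr2 : (β:ℝ)^q ≤ (α:ℝ)^p * (1 + 1/(2*(C:ℝ))) := by
      have h1 : Real.log ((β:ℝ)^q) < Real.log ((α:ℝ)^p) + Real.log (1 + 1/(2*(C:ℝ))) := by
        rw [hlogX, hlogY]; linarith [habs.1]
      have h2 := Real.exp_lt_exp.2 h1
      rw [Real.exp_log hYpos, Real.exp_add, Real.exp_log hXpos,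
        Real.exp_log (by positivity)] at h2
      linarith
    have key1 : 2*C*x ≤ 2*C*y + y := by
      have hreal : 2*(C:ℝ)*((α:ℝ)^p) ≤ 2*(C:ℝ)*((β:ℝ)^q) + (β:ℝ)^q := by
        have h2 : 2*(C:ℝ)*((α:ℝ)^p) ≤ 2*(C:ℝ)*((β:ℝ)^q * (1 + 1/(2*(C:ℝ)))) :=
          mul_le_mul_of_nonneg_left hr1 (by positivity)
        have h3 : 2*(C:ℝ)*((β:ℝ)^q * (1 + 1/(2*(C:ℝ)))) = 2*(C:ℝ)*((β:ℝ)^q) + (β:ℝ)^q := by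
          field_simp
        linarith
      rw [hx, hy]; exact_mod_cast hreal
    have key2 : 2*C*y ≤ 2*C*x + x := by
      have hreal : 2*(C:ℝ)*((β:ℝ)^q) ≤ 2*(C:ℝ)*((α:ℝ)^p) + (α:ℝ)^p := by
        have h2 : 2*(C:ℝ)*((β:ℝ)^q) ≤ 2*(C:ℝ)*((α:ℝ)^p * (1 + 1/(2*(C:ℝ)))) :=
          mul_le_mul_of_nonneg_left hr2 (by positivity)
        have h3 : 2*(C:ℝ)*((α:ℝ)^p * (1 + 1/(2*(C:ℝ)))) = 2*(C:ℝ)*((α:ℝ)^p) + (α:ℝ)^p := by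
          field_simp
        linarith
      rw [hx, hy]; exact_mod_cast hreal
    have hxy : 2*x ≤ 3*y := by
      rcases le_or_gt x y with h' | h'
      · linarith
      · have h1 : 2*(x - y) ≤ 2*C*(x - y) := by nlinarith
        linarith
    have hyB : 2*B < y := by linarith
    have habs2 : 2*(C*|x - y|) ≤ y := by
      rcases le_or_gt y x with h' | h'
      · rw [abs_of_nonneg (by linarith)]; linarith
      · rw [abs_of_neg (by linarith)]; nlinarith
    -- define the new exponents
    refine ⟨fun j => m j + (if z j = α then p else q), fun i => ?_⟩
    have hsum : ∑ j, A i j * (z j : ℤ) ^ (m j + (if z j = α then p else q))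
        = x * S i + y * T i := by
      have hterm : ∀ j, A i j * (z j : ℤ) ^ (m j + (if z j = α then p else q))
          = (if z j = α then x else y) * (A i j * (z j : ℤ) ^ (m j)) := by
        intro j
        by_cases hj : z j = α
        · rw [if_pos hj, if_pos hj, hj, pow_add, hx]; ring
        · have hjb : z j = β := (hz j).resolve_left hj
          rw [if_neg hj, if_neg hj, hjb, pow_add, hy]; ring
      rw [Finset.sum_congr rfl fun j _ => hterm j,
        ← Finset.sum_filter_add_sum_filter_not Finset.univ (fun j => z j = α)]
      congr 1
      · rw [hS, Finset.mul_sum]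
        refine Finset.sum_congr rfl fun j hj => ?_
        rw [if_pos (Finset.mem_filter.1 hj).2]
      · rw [hT, Finset.mul_sum]
        refine Finset.sum_congr rfl fun j hj => ?_
        rw [if_neg (Finset.mem_filter.1 hj).2]
    rw [hsum]
    -- final estimate
    have hST1 : 1 ≤ S i + T i := hST i
    have e2 : y ≤ y * (S i + T i) := by nlinarith
    have e1 : -(2*(C*|x - y|)) ≤ 2*((x - y)*S i) := by
      have h1 : |x - y| * |S i| ≤ |x - y| * C := mul_le_mul_of_nonneg_left (hCS i) (abs_nonneg _)
      have h2 : -((x - y)*S i) ≤ |(x - y)*S i| := neg_le_abs _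
      rw [abs_mul] at h2
      linarith
    have hexpand : x * S i + y * T i = y * (S i + T i) + (x - y) * S i := by ring
    linarith [hBi i, habs2]
  · rintro ⟨n, hn⟩
    exact ⟨n, fun i => lt_of_le_of_lt (hb i) (hn i)⟩
end

section
/- Let α, β ∈ ℕ with α, β > 1, let l ≥ 2, let z₁,…,z_l ∈ {α, β}, and let a, b ∈ {1,…,l} be distinct indices with z_a = z_b. Let A ∈ ℤ^{r×l} with r ≥ 1, and let N₁, N₂ ∈ ℕ with N₁ ≤ N₂. Then there exist matrices Ã_k ∈ ℤ^{r×(l−1)} for N₁ ≤ k ≤ N₂ and y₁,…,y_{l−1} ∈ {α, β} with the following property: there exist natural numbers n₁,…,n_{l−1} and some k with N₁ ≤ k ≤ N₂ such that every entry of Ã_k·(y₁^{n₁},…,y_{l−1}^{n_{l−1}}) is strictly positive, if and only if there exist natural numbers n₁,…,n_l such that every entry of A·(z₁^{n₁},…,z_l^{n_l}) is strictly positive and N₁ ≤ n_a − n_b ≤ N₂. -/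
/-!
Since `z_a = z_b`, substituting `n_a = n_b + k` turns the term `A_{ia} z_a^{n_a}` into
`(A_{ia} z_a^k) z_b^{n_b}`: column `a` of `A` folds into column `b` with weight `z_a^k`, giving
`Ã_k`. Conversely every solution with `n_b ≤ n_a` arises this way with `k = n_a - n_b`, so the
constraint `N₁ ≤ n_a - n_b ≤ N₂` becomes the range of `k`.
-/

open Finset Matrix

namespace Matrix

variable {ι R : Type*} {m : ℕ}

/-- Delete column `a` of `A` and add `c` times it to column `b` (indexed after the deletion). -/
def foldCol [Mul R] [Add R] [Zero R] (A : Matrix ι (Fin (m + 1)) R) (a : Fin (m + 1))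
    (b : Fin m) (c : R) : Matrix ι (Fin m) R :=
  of fun i j => A i (a.succAbove j) + if j = b then A i a * c else 0

theorem foldCol_mulVec [NonUnitalSemiring R] (A : Matrix ι (Fin (m + 1)) R) (a : Fin (m + 1))
    (b : Fin m) (c : R) (w : Fin m → R) :
    A.foldCol a b c *ᵥ w = A *ᵥ Fin.insertNth a (c * w b) w := by
  ext i
  simp only [mulVec, dotProduct, foldCol, of_apply, add_mul, sum_add_distrib, ite_mul, zero_mul,
    sum_ite_eq', mem_univ, if_true, Fin.sum_univ_succAbove _ a, Fin.insertNth_apply_same,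
    Fin.insertNth_apply_succAbove, mul_assoc]
  exact add_comm _ _

end Matrix

theorem Fin.pow_insertNth_add {M : Type*} [Monoid M] {m : ℕ} (x : Fin (m + 1) → M)
    (a : Fin (m + 1)) (b : Fin m) (hx : x (a.succAbove b) = x a) (k : ℕ) (n : Fin m → ℕ) :
    (fun j => x j ^ Fin.insertNth a (k + n b) n j) =
      Fin.insertNth a (x a ^ k * x (a.succAbove b) ^ n b) fun j => x (a.succAbove j) ^ n j := by
  ext j
  induction j using Fin.succAboveCases a with
  | x => simp only [Fin.insertNth_apply_same, hx, pow_add]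
  | p j => simp only [Fin.insertNth_apply_succAbove]

theorem eliminate_variable_general (α β : ℕ)
    (l : ℕ) (z : Fin l → ℕ) (hz : ∀ i, z i = α ∨ z i = β)
    (a b : Fin l) (hab : a ≠ b) (hzab : z a = z b)
    (r : ℕ) (A : Matrix (Fin r) (Fin l) ℤ)
    (N₁ N₂ : ℕ) :
    ∃ (Atil : ℕ → Matrix (Fin r) (Fin (l - 1)) ℤ) (y : Fin (l - 1) → ℕ),
      (∀ i, y i = α ∨ y i = β) ∧
      ((∃ k, N₁ ≤ k ∧ k ≤ N₂ ∧
          ∃ n : Fin (l - 1) → ℕ, ∀ i, 0 < ∑ j, Atil k i j * (y j : ℤ) ^ (n j)) ↔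
        (∃ n : Fin l → ℕ, (∀ i, 0 < ∑ j, A i j * (z j : ℤ) ^ (n j)) ∧
          (N₁ : ℤ) ≤ (n a : ℤ) - (n b : ℤ) ∧ (n a : ℤ) - (n b : ℤ) ≤ (N₂ : ℤ))) := by
  cases l with
  | zero => exact a.elim0
  | succ m =>
  obtain ⟨b, rfl⟩ := Fin.exists_succAbove_eq hab.symm
  have key (k : ℕ) (n : Fin m → ℕ) :
      A.foldCol a b ((z a : ℤ) ^ k) *ᵥ (fun j => (z (a.succAbove j) : ℤ) ^ n j) =
        A *ᵥ fun j => (z j : ℤ) ^ Fin.insertNth a (k + n b) n j := by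
    rw [foldCol_mulVec, Fin.pow_insertNth_add (fun j => (z j : ℤ)) a b (by rw [hzab]) k n]
  refine ⟨fun k => A.foldCol a b ((z a : ℤ) ^ k), fun j => z (a.succAbove j), fun j => hz _, ?_⟩
  constructor
  · rintro ⟨k, hk₁, hk₂, n, hn⟩
    refine ⟨Fin.insertNth a (k + n b) n, fun i => (hn i).trans_eq (congrFun (key k n) i), ?_⟩
    simp only [Fin.insertNth_apply_same, Fin.insertNth_apply_succAbove]
    omega
  · rintro ⟨n, hn, hN₁, hN₂⟩
    set k := n a - n (a.succAbove b)
    have hn_eq : Fin.insertNth a (k + Fin.removeNth a n b) (Fin.removeNth a n) = n := by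
      rw [Fin.removeNth, Nat.sub_add_cancel (by omega), Fin.insertNth_self_removeNth]
    refine ⟨k, by omega, by omega, Fin.removeNth a n, fun i => ?_⟩
    rw [← hn_eq] at hn
    exact (hn i).trans_eq (congrFun (key k _) i).symm

/-- Variable elimination: let `α, β > 1`, `l ≥ 2`, `z₁,…,z_l ∈ {α, β}`, and let `a ≠ b` be
indices with `z_a = z_b`. Given `A ∈ ℤ^{r×l}` with `r ≥ 1` and `N₁ ≤ N₂` in `ℕ`, there are
matrices `Ã_k ∈ ℤ^{r×(l−1)}` for `N₁ ≤ k ≤ N₂` and `y₁,…,y_{l−1} ∈ {α, β}` such that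
`Ã_k·(y₁^{n₁},…,y_{l−1}^{n_{l−1}}) > 0` has a solution for some `N₁ ≤ k ≤ N₂` if and only if
`A·(z₁^{n₁},…,z_l^{n_l}) > 0 ∧ N₁ ≤ n_a − n_b ≤ N₂` has a solution. -/
theorem eliminate_variable (α β : ℕ) (hα : 1 < α) (hβ : 1 < β)
    (l : ℕ) (hl : 2 ≤ l) (z : Fin l → ℕ) (hz : ∀ i, z i = α ∨ z i = β)
    (a b : Fin l) (hab : a ≠ b) (hzab : z a = z b)
    (r : ℕ) (hr : 1 ≤ r) (A : Matrix (Fin r) (Fin l) ℤ)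
    (N₁ N₂ : ℕ) (hN : N₁ ≤ N₂) :
    ∃ (Atil : ℕ → Matrix (Fin r) (Fin (l - 1)) ℤ) (y : Fin (l - 1) → ℕ),
      (∀ i, y i = α ∨ y i = β) ∧
      ((∃ k, N₁ ≤ k ∧ k ≤ N₂ ∧
          ∃ n : Fin (l - 1) → ℕ, ∀ i, 0 < ∑ j, Atil k i j * (y j : ℤ) ^ (n j)) ↔
        (∃ n : Fin l → ℕ, (∀ i, 0 < ∑ j, A i j * (z j : ℤ) ^ (n j)) ∧
          (N₁ : ℤ) ≤ (n a : ℤ) - (n b : ℤ) ∧ (n a : ℤ) - (n b : ℤ) ≤ (N₂ : ℤ))) :=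
  eliminate_variable_general α β l z hz a b hab hzab r A N₁ N₂
end
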